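/- arXiv:2206.04252 — 8 statements merged into one kernel-verified Lean document; each statement's English description precedes it below -/
import Mathlib

section
/- Let t be a positive integer, let A, S₁, …, S_t be nonempty finite sets, and let f : A → A, and for each 1 ≤ i ≤ t let φ_i : A → S_i and ψ_i : A → S_i be surjective maps and h_i : S_i → S_i maps with ψ_i ∘ f = h_i ∘ φ_i, such that φ = (φ₁, …, φ_t) : A → S₁ × ⋯ × S_t and ψ = (ψ₁, …, ψ_t) : A → S₁ × ⋯ × S_t are injective. Then f is a bijection if and only if h_i is injective for every 1 ≤ i ≤ t. Furthermore, if f is a bijection, φ' is a left inverse of φ, and h_i⁻¹ denotes the compositional inverse of h_i, then f⁻¹(x) = φ'(h₁⁻¹(ψ₁(x)), …, h_t⁻¹(ψ_t(x))) for all x ∈ A. -/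
theorem bijective_iff_components_injective_and_inverse
    (t : ℕ) (ht : 0 < t)
    (A : Type*) [Finite A] [Nonempty A]
    (S : Fin t → Type*) [∀ i, Finite (S i)] [∀ i, Nonempty (S i)]
    (f : A → A) (φ ψ : ∀ i, A → S i) (h : ∀ i, S i → S i)
    (hφsurj : ∀ i, Function.Surjective (φ i))
    (hψsurj : ∀ i, Function.Surjective (ψ i))
    (hcomm : ∀ i, (fun a : A => ψ i (f a)) = fun a : A => h i (φ i a))
    (hφ : Function.Injective (fun a : A => fun i => φ i a))
    (hψ : Function.Injective (fun a : A => fun i => ψ i a)) :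
    (Function.Bijective f ↔ ∀ i, Function.Injective (h i)) ∧
      (Function.Bijective f →
        ∀ (φ' : (∀ i, S i) → A) (hinv : ∀ i, S i → S i),
          (φ' ∘ fun a : A => fun i => φ i a) = id →
          (∀ i, Function.LeftInverse (hinv i) (h i) ∧
            Function.RightInverse (hinv i) (h i)) →
          ∀ x : A, f (φ' (fun i => hinv i (ψ i x))) = x) := by
  have hcomm' : ∀ i a, ψ i (f a) = h i (φ i a) := fun i a => congrFun (hcomm i) a
  constructor
  · constructor
    · intro hf i
      have hsurj : Function.Surjective (h i) := by
        intro s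
        obtain ⟨a, ha⟩ := hψsurj i s
        obtain ⟨b, hb⟩ := hf.2 a
        exact ⟨φ i b, by rw [← hcomm' i b, hb, ha]⟩
      exact (Finite.surjective_iff_bijective.mp hsurj).1
    · intro hi
      have hinj : Function.Injective f := by
        intro a b hab
        apply hφ
        funext i
        apply hi i
        rw [← hcomm' i a, ← hcomm' i b, hab]
      exact Finite.injective_iff_bijective.mp hinj
  · intro hf φ' hinv hleft hinvs x
    obtain ⟨a, ha⟩ := hf.2 x
    have : (fun i => hinv i (ψ i x)) = fun i => φ i a := by
      funext i
      rw [← ha, hcomm' i a, (hinvs i).1 (φ i a)]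
    rw [this, show φ' (fun i => φ i a) = a from congrFun hleft a, ha]
end

section
/- Let m be a positive integer and let i, j be integers with 0 ≤ i, j ≤ d − 1. Then for every x ∈ E: if j ≡ i·m (mod d), then A_j(A_i(x)^m) = d · ω^{−j} · A_i(x)^m, and if j ≢ i·m (mod d), then A_j(A_i(x)^m) = 0. -/
/-- The linearized polynomial map `A_i(x) = ∑_{k=0}^{d-1} ω^{i k} x^{q^{d-1-k}}`. -/
def AMap (q d : ℕ) {F E : Type*} [Field F] [Field E] [Algebra F E]
    (ω : F) (i : ℕ) (x : E) : E :=
  ∑ k ∈ Finset.range d, (algebraMap F E ω) ^ (i * k) * x ^ (q ^ (d - 1 - k))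

theorem AMap_comp_AMap_pow
    (q d : ℕ) (hd : 1 < d) (hq : q % d = 1)
    (F E : Type*) [Field F] [Field E] [Algebra F E] [Fintype F] [Fintype E]
    (hF : Fintype.card F = q) (hE : Fintype.card E = q ^ d)
    (ω : F) (hω : orderOf ω = d)
    (m : ℕ) (hm : 0 < m) (i j : ℕ) (hi : i < d) (hj : j < d) :
    ∀ x : E,
      (j ≡ i * m [MOD d] →
        AMap q d ω j ((AMap q d ω i x) ^ m) =
          (d : E) * ((algebraMap F E ω) ^ j)⁻¹ * (AMap q d ω i x) ^ m) ∧
      (¬ j ≡ i * m [MOD d] →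
        AMap q d ω j ((AMap q d ω i x) ^ m) = 0) := by
  have hd0 : 0 < d := by omega
  set A : E := algebraMap F E ω with hA
  have hωd : ω ^ d = 1 := by rw [← hω]; exact pow_orderOf_eq_one ω
  have hAd : A ^ d = 1 := by rw [hA, ← map_pow, hωd, map_one]
  have hωq : ω ^ q = ω := by
    conv_lhs => rw [← Nat.div_add_mod q d, hq]
    rw [pow_add, pow_mul, hωd, one_pow, one_mul, pow_one]
  have hAq1 : A ^ q = A := by rw [hA, ← map_pow, hωq]
  have hAc : ∀ c : ℕ, (A ^ c) ^ q = A ^ c := by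
    intro c
    rw [← pow_mul, mul_comm, pow_mul, hAq1]
  have hmodA : ∀ a : ℕ, A ^ a = A ^ (a % d) := by
    intro a
    conv_lhs => rw [← Nat.div_add_mod a d]
    rw [pow_add, pow_mul, hAd, one_pow, one_mul]
  have hApow : ∀ a b : ℕ, a ≡ b [MOD d] → A ^ a = A ^ b := by
    intro a b hab
    rw [hmodA a, hmodA b, show a % d = b % d from hab]
  have hAorder : orderOf A = d := by
    rw [hA, ← hω]
    exact orderOf_injective (algebraMap F E).toMonoidHom (algebraMap F E).injective ω
  -- characteristic and Frobenius
  set p := ringChar F with hpdef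
  haveI : CharP F p := ringChar.charP F
  have hp : p.Prime := CharP.char_is_prime F p
  haveI : Fact p.Prime := ⟨hp⟩
  obtain ⟨n, -, hcard⟩ := FiniteField.card F p
  rw [hF] at hcard
  haveI : CharP E p := charP_of_injective_algebraMap (algebraMap F E).injective p
  have hq_sum : ∀ (s : Finset ℕ) (g : ℕ → E),
      (∑ k ∈ s, g k) ^ q = ∑ k ∈ s, (g k) ^ q := by
    intro s g
    have h : ∀ y : E, y ^ q = iterateFrobenius E p n y := fun y => by
      rw [iterateFrobenius_def, ← hcard]
    simp only [h, map_sum]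
  have hEcard : ∀ x : E, x ^ q ^ d = x := by
    intro x; rw [← hE]; exact FiniteField.pow_card x
  -- key: Frobenius twists AMap by ω^i
  have key : ∀ x : E, (AMap q d ω i x) ^ q = A ^ i * AMap q d ω i x := by
    intro x
    rw [AMap, hq_sum, Finset.mul_sum]
    simp only [← hA]
    have hL : ∀ k ∈ Finset.range d,
        (A ^ (i * k) * x ^ q ^ (d - 1 - k)) ^ q = A ^ (i * k) * x ^ q ^ (d - k) := by
      intro k hk
      rw [Finset.mem_range] at hk
      rw [mul_pow, hAc, ← pow_mul, ← pow_succ,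
        show d - 1 - k + 1 = d - k by omega]
    rw [Finset.sum_congr rfl hL]
    obtain ⟨e, rfl⟩ : ∃ e, d = e + 1 := ⟨d - 1, by omega⟩
    rw [Finset.sum_range_succ', Finset.sum_range_succ]
    congr 1
    · refine Finset.sum_congr rfl fun k hk => ?_
      rw [← mul_assoc, ← pow_add, show i * (k + 1) = i + i * k by ring,
        show e + 1 - (k + 1) = e + 1 - 1 - k by omega]
    · rw [Nat.mul_zero, pow_zero, one_mul, Nat.sub_zero, hEcard,
        show e + 1 - 1 - e = 0 by omega, pow_zero, pow_one, ← mul_assoc, ← pow_add,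
        show i + i * e = i * (e + 1) by ring,
        hApow (i * (e + 1)) 0 (Nat.modEq_zero_iff_dvd.mpr ⟨i, by ring⟩),
        pow_zero, one_mul]
  have keym : ∀ (x : E) (t : ℕ),
      ((AMap q d ω i x) ^ m) ^ q ^ t = A ^ (i * m * t) * (AMap q d ω i x) ^ m := by
    intro x t
    induction t with
    | zero => simp
    | succ t ih =>
      set y := AMap q d ω i x with hy
      calc (y ^ m) ^ q ^ (t + 1) = ((y ^ m) ^ q ^ t) ^ q := by rw [pow_succ, pow_mul]
        _ = (A ^ (i * m * t) * y ^ m) ^ q := by rw [ih]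
        _ = A ^ (i * m * t) * (y ^ q) ^ m := by
              rw [mul_pow, hAc, ← pow_mul, mul_comm m q, pow_mul y q m]
        _ = A ^ (i * m * t) * (A ^ i * y) ^ m := by rw [key]
        _ = A ^ (i * m * (t + 1)) * y ^ m := by
              rw [mul_pow, ← pow_mul, ← mul_assoc, ← pow_add,
                show i * m * t + i * m = i * m * (t + 1) by ring]
  intro x
  set y := AMap q d ω i x with hy
  have hsum : AMap q d ω j (y ^ m)
      = (∑ k ∈ Finset.range d, A ^ (j * k + i * m * (d - 1 - k))) * y ^ m := by
    rw [AMap, Finset.sum_mul]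
    refine Finset.sum_congr rfl fun k hk => ?_
    rw [← hA, hy, keym, pow_add]
    ring
  set B : E := A ^ (j + i * m * (d - 1)) with hB
  have hBd : B ^ d = 1 := by
    rw [hB, ← pow_mul, mul_comm, pow_mul, hAd, one_pow]
  have hterm : ∀ k ∈ Finset.range d,
      A ^ (j * k + i * m * (d - 1 - k)) = A ^ (i * m * (d - 1)) * B ^ k := by
    intro k hk
    rw [Finset.mem_range] at hk
    rw [hB, ← pow_mul, ← pow_add]
    apply hApow
    obtain ⟨c, hc1, hc2, hc3⟩ : ∃ c, d - 1 - k = c ∧ d - 1 = k + c ∧ d = k + c + 1 :=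
      ⟨d - 1 - k, rfl, by omega, by omega⟩
    rw [hc1, hc2, hc3]
    show (j * k + i * m * c) % (k + c + 1)
        = (i * m * (k + c) + (j + i * m * (k + c)) * k) % (k + c + 1)
    have h2 : i * m * (k + c) + (j + i * m * (k + c)) * k
        = j * k + i * m * c + (i * m * k) * (k + c + 1) := by ring
    rw [h2, Nat.add_mul_mod_self_right]
  have hzero : ∀ a b : ℕ, a + b * (d - 1) + b = a + b * d := by
    intro a b
    rw [add_assoc, ← Nat.mul_succ, show (d - 1).succ = d by omega]
  constructor
  · intro h
    have hmod0 : j + i * m * (d - 1) ≡ 0 [MOD d] := by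
      have h1 : j + i * m * (d - 1) ≡ i * m + i * m * (d - 1) [MOD d] :=
        Nat.ModEq.add_right _ h
      refine h1.trans ?_
      have h3 : i * m + i * m * (d - 1) = i * m * d := by
        have := hzero 0 (i * m); omega
      rw [h3]
      exact Nat.modEq_zero_iff_dvd.mpr ⟨i * m, mul_comm _ _⟩
    have hB1 : B = 1 := by
      rw [hB, hApow _ 0 hmod0, pow_zero]
    have hAinv : (A ^ j)⁻¹ = A ^ (i * m * (d - 1)) := by
      apply inv_eq_of_mul_eq_one_right
      rw [← pow_add, hApow _ 0 hmod0, pow_zero]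
    rw [hsum, Finset.sum_congr rfl hterm, ← Finset.mul_sum, hB1]
    simp only [one_pow, Finset.sum_const, Finset.card_range, nsmul_eq_mul, mul_one]
    rw [hAinv]
    ring
  · intro h
    have hB1 : B ≠ 1 := by
      intro hB1
      apply h
      have h0 : d ∣ j + i * m * (d - 1) := by
        have h1 : A ^ (j + i * m * (d - 1)) = 1 := by rw [← hB]; exact hB1
        have h2 := orderOf_dvd_of_pow_eq_one h1
        rwa [hAorder] at h2
      have h1 : j + i * m * (d - 1) + i * m ≡ 0 + i * m [MOD d] :=
        (Nat.modEq_zero_iff_dvd.mpr h0).add_right _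
      rw [hzero j (i * m), Nat.zero_add] at h1
      show j % d = (i * m) % d
      rw [← Nat.add_mul_mod_self_right j (i * m) d]
      exact h1
    rw [hsum, Finset.sum_congr rfl hterm, ← Finset.mul_sum,
      geom_sum_eq hB1 d, hBd, sub_self, zero_div, mul_zero, zero_mul]
end

section
/- For 0 ≤ i ≤ d − 1 let B_i = { A_i(x) : x ∈ E } be the image of A_i. Then 0 ∈ B_i, and for any two nonzero elements y₁, y₂ ∈ B_i the quotient y₁/y₂ lies in F^×; consequently, for any fixed nonzero y_i ∈ B_i one has B_i = {0} ∪ y_i·F^×. -/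
open Polynomial in
/-- An element of `E` fixed by `x ↦ x^q` lies in the image of `F`. -/
lemma fixed_mem_range_algebraMap
    (q : ℕ) (F E : Type*) [Field F] [Field E] [Algebra F E] [Fintype F] [Fintype E]
    (hF : Fintype.card F = q) (t : E) (ht : t ^ q = t) :
    ∃ c : F, algebraMap F E c = t := by
  by_contra h
  push_neg at h
  have hq2 : 1 < q := hF ▸ Fintype.one_lt_card
  set P : E[X] := X ^ q - X with hP
  have hPdeg : P.natDegree = q := FiniteField.X_pow_card_sub_X_natDegree_eq E hq2
  have hP0 : P ≠ 0 := FiniteField.X_pow_card_sub_X_ne_zero E hq2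
  classical
  set S : Finset E := insert t ((Set.range (algebraMap F E)).toFinset) with hS
  have hsub : S ⊆ P.roots.toFinset := by
    intro s hs
    rw [Multiset.mem_toFinset, mem_roots hP0]
    have : s ^ q = s := by
      rcases Finset.mem_insert.mp hs with rfl | hs
      · exact ht
      · rw [Set.mem_toFinset] at hs
        obtain ⟨c, rfl⟩ := hs
        rw [← map_pow, ← hF, FiniteField.pow_card c]
    simp [hP, IsRoot, this, sub_eq_zero]
  have hcardS : S.card = q + 1 := by
    rw [hS, Finset.card_insert_of_notMem (by
      rw [Set.mem_toFinset]; rintro ⟨c, hc⟩; exact h c hc)]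
    rw [Set.toFinset_range, Finset.card_image_of_injective _ (algebraMap F E).injective,
      Finset.card_univ, hF]
  have := (Finset.card_le_card hsub).trans ((P.roots.toFinset_card_le).trans P.card_roots')
  omega

/-- `A_i(x)^q = ω^i · A_i(x)`. -/
lemma AMap_pow_q
    (q d : ℕ) (hd : 1 < d) (hq : q % d = 1)
    (F E : Type*) [Field F] [Field E] [Algebra F E] [Fintype F] [Fintype E]
    (hF : Fintype.card F = q) (hE : Fintype.card E = q ^ d)
    (ω : F) (hω : orderOf ω = d) (i : ℕ) (x : E) :
    (AMap q d ω i x) ^ q = (algebraMap F E ω) ^ i * AMap q d ω i x := by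
  obtain ⟨n, hp, hcard⟩ := FiniteField.card F (ringChar F)
  set p := ringChar F with hpdef
  haveI : CharP E p := charP_of_injective_algebraMap (algebraMap F E).injective p
  haveI : Fact p.Prime := ⟨hp⟩
  have hqpn : q = p ^ (n : ℕ) := by rw [← hF, hcard]
  have hsum : ∀ s : Finset ℕ, ∀ f : ℕ → E, (∑ k ∈ s, f k) ^ q = ∑ k ∈ s, (f k) ^ q := by
    intro s f
    rw [hqpn, ← iterateFrobenius_def, map_sum]
    simp only [iterateFrobenius_def]
  have hωd : ω ^ d = 1 := by rw [← hω]; exact pow_orderOf_eq_one ω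
  set c : E := algebraMap F E ω with hc
  obtain ⟨e, rfl⟩ : ∃ e, d = e + 1 := ⟨d - 1, by omega⟩
  have hterm : ∀ k < e + 1, ((c ^ (i * k)) * x ^ (q ^ (e + 1 - 1 - k))) ^ q
      = c ^ (i * k) * x ^ (q ^ (e + 1 - k)) := by
    intro k hk
    have h1 : (c ^ (i * k)) ^ q = c ^ (i * k) := by
      rw [hc, ← map_pow, ← map_pow, ← hF, FiniteField.pow_card]
    have h2 : (x ^ (q ^ (e + 1 - 1 - k))) ^ q = x ^ (q ^ (e + 1 - k)) := by
      rw [← pow_mul, ← pow_succ]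
      congr 2
      omega
    rw [mul_pow, h1, h2]
  unfold AMap
  rw [hsum, Finset.sum_congr rfl (fun k hk => hterm k (Finset.mem_range.mp hk)), Finset.mul_sum]
  rw [Finset.sum_range_succ' (fun k => c ^ (i * k) * x ^ (q ^ (e + 1 - k))) e,
    Finset.sum_range_succ]
  have h0 : c ^ (i * 0) * x ^ q ^ (e + 1 - 0) = x := by
    simp only [Nat.mul_zero, pow_zero, one_mul, Nat.sub_zero]
    rw [← hE, FiniteField.pow_card]
  have hlast : c ^ i * (c ^ (i * e) * x ^ q ^ (e + 1 - 1 - e)) = x := by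
    simp only [Nat.add_sub_cancel, Nat.sub_self, pow_zero, pow_one]
    rw [← mul_assoc, ← pow_add, hc, ← map_pow,
      show i + i * e = i * (e + 1) by ring, mul_comm i (e+1), pow_mul, hωd, one_pow,
      map_one, one_mul]
  rw [h0, hlast]
  congr 1
  apply Finset.sum_congr rfl
  intro k hk
  rw [Finset.mem_range] at hk
  have : e + 1 - (k + 1) = e + 1 - 1 - k := by omega
  rw [this, Nat.mul_add, Nat.mul_one, pow_add]
  ring

/-- `A_i` is `F`-linear for scaling. -/
lemma AMap_smul
    (q d : ℕ) (F E : Type*) [Field F] [Field E] [Algebra F E] [Fintype F]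
    (hF : Fintype.card F = q) (ω : F) (i : ℕ) (a : F) (x : E) :
    AMap q d ω i (algebraMap F E a * x) = algebraMap F E a * AMap q d ω i x := by
  unfold AMap
  rw [Finset.mul_sum]
  apply Finset.sum_congr rfl
  intro k _
  have ha : (algebraMap F E a) ^ (q ^ (d - 1 - k)) = algebraMap F E a := by
    rw [← map_pow, ← hF, FiniteField.pow_card_pow]
  rw [mul_pow, ha]
  ring

theorem range_AMap_eq_line
    (q d : ℕ) (hd : 1 < d) (hq : q % d = 1)
    (F E : Type*) [Field F] [Field E] [Algebra F E] [Fintype F] [Fintype E]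
    (hF : Fintype.card F = q) (hE : Fintype.card E = q ^ d)
    (ω : F) (hω : orderOf ω = d)
    (i : ℕ) (hi : i < d) :
    (0 : E) ∈ Set.range (AMap q d ω i) ∧
      (∀ y₁ ∈ Set.range (AMap q d ω i), ∀ y₂ ∈ Set.range (AMap q d ω i),
        y₁ ≠ 0 → y₂ ≠ 0 → ∃ c : F, c ≠ 0 ∧ y₁ / y₂ = algebraMap F E c) ∧
      (∀ y ∈ Set.range (AMap q d ω i), y ≠ 0 →
        Set.range (AMap q d ω i) =
          {0} ∪ {z : E | ∃ c : F, c ≠ 0 ∧ z = y * algebraMap F E c}) := by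
  have hq2 : 1 < q := hF ▸ Fintype.one_lt_card
  have hq0 : q ≠ 0 := by omega
  have hzero : (0 : E) ∈ Set.range (AMap q d ω i) := by
    refine ⟨0, ?_⟩
    unfold AMap
    simp [zero_pow, pow_ne_zero, hq0]
  have hω0 : ω ≠ 0 := by
    intro h
    have h1 : ω ^ d = 1 := hω ▸ pow_orderOf_eq_one ω
    rw [h, zero_pow (by omega)] at h1
    exact one_ne_zero h1.symm
  have hc0 : (algebraMap F E ω) ^ i ≠ 0 :=
    pow_ne_zero _ (by simpa using hω0)
  have key : ∀ y₁ ∈ Set.range (AMap q d ω i), ∀ y₂ ∈ Set.range (AMap q d ω i),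
      y₁ ≠ 0 → y₂ ≠ 0 → ∃ c : F, c ≠ 0 ∧ y₁ / y₂ = algebraMap F E c := by
    rintro y₁ ⟨x₁, rfl⟩ y₂ ⟨x₂, rfl⟩ h₁ h₂
    have ht : (AMap q d ω i x₁ / AMap q d ω i x₂) ^ q
        = AMap q d ω i x₁ / AMap q d ω i x₂ := by
      rw [div_pow, AMap_pow_q q d hd hq F E hF hE ω hω,
        AMap_pow_q q d hd hq F E hF hE ω hω, mul_div_mul_left _ _ hc0]
    obtain ⟨a, ha⟩ := fixed_mem_range_algebraMap q F E hF _ ht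
    refine ⟨a, ?_, ha.symm⟩
    intro h0
    rw [h0, map_zero] at ha
    exact div_ne_zero h₁ h₂ ha.symm
  refine ⟨hzero, key, ?_⟩
  intro y hy hy0
  ext z
  simp only [Set.mem_union, Set.mem_singleton_iff, Set.mem_setOf_eq]
  constructor
  · intro hz
    by_cases hz0 : z = 0
    · exact Or.inl hz0
    · right
      obtain ⟨a, ha0, ha⟩ := key z hz y hy hz0 hy0
      rw [div_eq_iff hy0] at ha
      exact ⟨a, ha0, by rw [ha, mul_comm]⟩
  · rintro (rfl | ⟨a, ha0, rfl⟩)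
    · exact hzero
    · obtain ⟨x, rfl⟩ := hy
      exact ⟨algebraMap F E a * x, by rw [AMap_smul q d F E hF, mul_comm]⟩
end

section
/- Let m₀, …, m_{d−1} be positive integers and u₀, …, u_{d−1} ∈ F. Then the map f : E → E, f(x) = Σ_{i=0}^{d−1} u_i · A_i(x)^{m_i}, is a bijection of E if and only if the following three conditions hold: (1) the residues {i·m_i mod d : 0 ≤ i ≤ d − 1} form a complete residue system modulo d; (2) u₀·u₁·⋯·u_{d−1} ≠ 0; (3) gcd(m₀·m₁·⋯·m_{d−1}, q − 1) = 1. -/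
theorem pp_iff_complete_residues
    (q d : ℕ) (hd : 1 < d) (hq : q % d = 1)
    (F E : Type*) [Field F] [Field E] [Algebra F E] [Fintype F] [Fintype E]
    (hF : Fintype.card F = q) (hE : Fintype.card E = q ^ d)
    (ω : F) (hω : orderOf ω = d)
    (m : ℕ → ℕ) (hm : ∀ i < d, 0 < m i) (u : ℕ → F) :
    Function.Bijective (fun x : E =>
        ∑ i ∈ Finset.range d, algebraMap F E (u i) * (AMap q d ω i x) ^ (m i)) ↔
      (((Finset.range d).image fun i => i * m i % d) = Finset.range d ∧
        (∏ i ∈ Finset.range d, u i) ≠ 0 ∧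
        Nat.gcd (∏ i ∈ Finset.range d, m i) (q - 1) = 1) := by
  classical
  have hq2 : 2 ≤ q := hF ▸ Fintype.one_lt_card
  have hq0 : 0 < q := by omega
  have hd0 : 0 < d := by omega
  have hinjFE : Function.Injective (algebraMap F E) := (algebraMap F E).injective
  set p := ringChar F with hpdef
  haveI : CharP F p := ringChar.charP F
  have hp : p.Prime := CharP.char_is_prime F p
  haveI : Fact p.Prime := ⟨hp⟩
  haveI hCharE : CharP E p := charP_of_injective_algebraMap hinjFE p
  obtain ⟨n, -, hcard⟩ := FiniteField.card F p
  rw [hF] at hcard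
  -- the Frobenius-type ring homs
  have hfrob : ∀ s : ℕ, ∃ φ : E →+* E, ∀ x : E, φ x = x ^ q ^ s := by
    intro s
    haveI : ExpChar E p := ExpChar.prime hp
    refine ⟨iterateFrobenius E p ((n : ℕ) * s), fun x => ?_⟩
    rw [iterateFrobenius_def, pow_mul, ← hcard]
  -- algebraMap elements are fixed
  have halg : ∀ (a : F) (s : ℕ), (algebraMap F E a) ^ q ^ s = algebraMap F E a := by
    intro a s
    rw [← map_pow]
    exact congrArg _ (hF ▸ FiniteField.pow_card_pow s a)
  have hpowE : ∀ x : E, x ^ q ^ d = x := by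
    intro x; rw [← hE]; exact FiniteField.pow_card x
  have hω0 : ω ≠ 0 := by
    intro h
    have h1 : ω ^ d = 1 := hω ▸ pow_orderOf_eq_one ω
    rw [h, zero_pow (by omega)] at h1
    exact zero_ne_one h1
  have hdq1 : d ∣ q - 1 := by
    rw [← hω]
    exact orderOf_dvd_of_pow_eq_one (hF ▸ FiniteField.pow_card_sub_one_eq_one ω hω0)
  set ζ : E := algebraMap F E ω with hζdef
  have hζord : orderOf ζ = d := by
    have := orderOf_injective (algebraMap F E).toMonoidHom hinjFE ω
    simpa [hω] using this
  have hζd : ζ ^ d = 1 := by rw [← hζord]; exact pow_orderOf_eq_one ζ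
  have hζ0 : ζ ≠ 0 := by
    intro h
    have := hζd
    rw [h, zero_pow (by omega)] at this
    exact zero_ne_one this
  have hdE : (d : E) ≠ 0 := by
    rw [Ne, CharP.cast_eq_zero_iff E p d]
    intro hpd
    have h2 : p ∣ q := hcard ▸ dvd_pow_self p (by exact_mod_cast n.pos.ne')
    have h3 : p ∣ 1 := by
      have := Nat.dvd_sub h2 (hpd.trans hdq1)
      simpa [Nat.sub_sub_self (by omega : 1 ≤ q)] using this
    exact hp.ne_one (Nat.dvd_one.mp h3)
  have halg1 : ∀ a : F, (algebraMap F E a) ^ q = algebraMap F E a := by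
    intro a
    have := halg a 1
    rwa [pow_one] at this
  have hζpowq : ∀ r : ℕ, (ζ ^ r) ^ q = ζ ^ r := by
    intro r
    rw [hζdef, ← map_pow, halg1]
  have hgeom : ∀ r : ℕ, (∑ k ∈ Finset.range d, (ζ ^ r) ^ k) = if d ∣ r then (d : E) else 0 := by
    intro r
    by_cases hdr : d ∣ r
    · obtain ⟨t, rfl⟩ := hdr
      rw [if_pos ⟨t, rfl⟩]
      have h1 : ζ ^ (d * t) = 1 := by rw [pow_mul, hζd, one_pow]
      simp [h1]
    · have h1 : ζ ^ r ≠ 1 := fun h => hdr (hζord ▸ orderOf_dvd_of_pow_eq_one h)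
      have h2 : (ζ ^ r) ^ d = 1 := by rw [← pow_mul, mul_comm r d, pow_mul, hζd, one_pow]
      rw [if_neg hdr, geom_sum_eq h1, h2, sub_self, zero_div]
  have hVpows : ∀ (j s : ℕ) (x : E), x ^ q = ζ ^ j * x → x ^ q ^ s = ζ ^ (j * s) * x := by
    intro j s x hx
    induction s with
    | zero => simp
    | succ s ih =>
      rw [pow_succ, pow_mul, ih, mul_pow, hζpowq, hx, ← mul_assoc, ← pow_add,
        Nat.mul_succ]
  have hAV : ∀ i, i < d → ∀ j, j < d → ∀ x : E, x ^ q = ζ ^ j * x →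
      AMap q d ω i x = if i = j then (d : E) * ζ ^ (j * (d - 1)) * x else 0 := by
    intro i hi j hj x hx
    have hterm : ∀ k ∈ Finset.range d,
        (algebraMap F E ω) ^ (i * k) * x ^ q ^ (d - 1 - k)
          = ζ ^ (j * (d - 1)) * ((ζ ^ (i + j * (d - 1))) ^ k * x) := by
      intro k hk
      rw [Finset.mem_range] at hk
      have hexp : j * (d - 1) + (i + j * (d - 1)) * k
          = i * k + j * (d - 1 - k) + d * (j * k) := by
        have h1 : k ≤ d - 1 := by omega
        have h2 : 1 ≤ d := by omega
        zify [h1, h2]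
        ring
      rw [hVpows j (d - 1 - k) x hx, ← hζdef, ← pow_mul ζ (i + j * (d - 1)) k,
        ← mul_assoc, ← mul_assoc, ← pow_add, ← pow_add]
      congr 1
      conv_rhs => rw [hexp, pow_add, pow_mul ζ d, hζd, one_pow, mul_one]
    rw [AMap, Finset.sum_congr rfl hterm, ← Finset.mul_sum, ← Finset.sum_mul,
      hgeom (i + j * (d - 1))]
    by_cases hij : i = j
    · subst hij
      have hdvd : d ∣ i + i * (d - 1) := by
        refine ⟨i, ?_⟩
        have h3 : i * (d - 1) + i = i * (d - 1 + 1) := by rw [Nat.mul_succ]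
        rw [add_comm, h3, Nat.sub_add_cancel (by omega), mul_comm]
      rw [if_pos hdvd, if_pos rfl]
      ring
    · have hndvd : ¬ d ∣ i + j * (d - 1) := by
        intro hdvd
        obtain ⟨t, ht⟩ := hdvd
        have h3 : i + j * (d - 1) + j = i + j * d := by
          rw [add_assoc, ← Nat.mul_succ, Nat.succ_eq_add_one, Nat.sub_add_cancel (by omega)]
        have h8 : i % d = j % d := by
          have e1 : (i + j * d) % d = i % d := Nat.add_mul_mod_self_right i j d
          have e2 : (d * t + j) % d = j % d := Nat.mul_add_mod d t j
          rw [← e1, ← h3, ht, e2]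
        rw [Nat.mod_eq_of_lt hi, Nat.mod_eq_of_lt hj] at h8
        exact hij h8
      rw [if_neg hndvd, if_neg hij]
      ring
  have hA0 : ∀ i, AMap q d ω i (0 : E) = 0 := by
    intro i
    rw [AMap]
    refine Finset.sum_eq_zero fun k hk => ?_
    rw [zero_pow (pow_pos hq0 _).ne', mul_zero]
  have hAsum : ∀ (i : ℕ) (s : Finset ℕ) (g : ℕ → E),
      AMap q d ω i (∑ j ∈ s, g j) = ∑ j ∈ s, AMap q d ω i (g j) := by
    intro i s g
    rw [AMap]
    have hterm : ∀ k ∈ Finset.range d,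
        (algebraMap F E ω) ^ (i * k) * (∑ j ∈ s, g j) ^ q ^ (d - 1 - k)
          = ∑ j ∈ s, (algebraMap F E ω) ^ (i * k) * (g j) ^ q ^ (d - 1 - k) := by
      intro k hk
      obtain ⟨φ, hφ⟩ := hfrob (d - 1 - k)
      rw [← hφ, map_sum, Finset.mul_sum]
      exact Finset.sum_congr rfl fun j hj => by rw [hφ]
    rw [Finset.sum_congr rfl hterm, Finset.sum_comm]
    rfl
  have hAsmul : ∀ (i : ℕ) (a : F) (z : E),
      AMap q d ω i (algebraMap F E a * z) = algebraMap F E a * AMap q d ω i z := by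
    intro i a z
    rw [AMap, AMap, Finset.mul_sum]
    refine Finset.sum_congr rfl fun k hk => ?_
    rw [mul_pow, halg a]
    ring
  have hAmem : ∀ (i : ℕ) (x : E), (AMap q d ω i x) ^ q = ζ ^ i * AMap q d ω i x := by
    intro i x
    obtain ⟨φ, hφ0⟩ := hfrob 1
    have hφ : ∀ z : E, φ z = z ^ q := fun z => by rw [hφ0, pow_one]
    set h : ℕ → E := fun j => ζ ^ (i * j) * x ^ q ^ (d - j) with hh
    have lhs : (AMap q d ω i x) ^ q = ∑ k ∈ Finset.range d, h k := by
      rw [← hφ, AMap, map_sum]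
      refine Finset.sum_congr rfl fun k hk => ?_
      rw [Finset.mem_range] at hk
      rw [hφ, mul_pow, ← hζdef, hζpowq, ← pow_mul, ← pow_succ,
        show d - 1 - k + 1 = d - k by omega]
    have rhs : ζ ^ i * AMap q d ω i x = ∑ k ∈ Finset.range d, h (k + 1) := by
      rw [AMap, Finset.mul_sum]
      refine Finset.sum_congr rfl fun k hk => ?_
      rw [hh]
      show ζ ^ i * ((algebraMap F E ω) ^ (i * k) * x ^ q ^ (d - 1 - k))
        = ζ ^ (i * (k + 1)) * x ^ q ^ (d - (k + 1))
      rw [← hζdef, ← mul_assoc, ← pow_add, Nat.mul_succ, add_comm i (i * k),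
        show d - 1 - k = d - (k + 1) from by omega]
    have h0 : h 0 = x := by
      simp only [hh]
      rw [Nat.mul_zero, pow_zero, one_mul, Nat.sub_zero, hpowE]
    have hdd : h d = x := by
      simp only [hh]
      rw [Nat.sub_self, pow_zero, pow_one, mul_comm i d, pow_mul, hζd, one_pow, one_mul]
    have e1 := Finset.sum_range_succ' h d
    have e2 := Finset.sum_range_succ h d
    rw [h0] at e1
    rw [hdd] at e2
    rw [lhs, rhs]
    have := e1.symm.trans e2
    exact add_right_cancel this |>.symm
  have hrecon : ∀ x : E, (d : E)⁻¹ * ∑ i ∈ Finset.range d, ζ ^ i * AMap q d ω i x = x := by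
    intro x
    have key : ∑ i ∈ Finset.range d, ζ ^ i * AMap q d ω i x = (d : E) * x := by
      have step1 : ∀ i ∈ Finset.range d, ζ ^ i * AMap q d ω i x
          = ∑ k ∈ Finset.range d, (ζ ^ (k + 1)) ^ i * x ^ q ^ (d - 1 - k) := by
        intro i hi
        rw [AMap, Finset.mul_sum]
        refine Finset.sum_congr rfl fun k hk => ?_
        rw [← hζdef, ← mul_assoc, ← pow_add, ← pow_mul,
          show i + i * k = (k + 1) * i from by ring, pow_mul]
      rw [Finset.sum_congr rfl step1, Finset.sum_comm]
      have step2 : ∀ k ∈ Finset.range d,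
          (∑ i ∈ Finset.range d, (ζ ^ (k + 1)) ^ i * x ^ q ^ (d - 1 - k))
            = (if d ∣ (k + 1) then (d : E) else 0) * x ^ q ^ (d - 1 - k) := by
        intro k hk
        rw [← Finset.sum_mul, hgeom (k + 1)]
      rw [Finset.sum_congr rfl step2]
      rw [Finset.sum_eq_single_of_mem (d - 1) (Finset.mem_range.mpr (by omega))]
      · rw [if_pos (show d ∣ d - 1 + 1 by rw [Nat.sub_add_cancel (by omega)]),
          Nat.sub_self, pow_zero, pow_one]
      · intro k hk hkne
        rw [Finset.mem_range] at hk
        have hnd : ¬ d ∣ k + 1 := fun hdvd => by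
          have := Nat.eq_zero_of_dvd_of_lt hdvd (by omega)
          omega
        rw [if_neg hnd, zero_mul]
    rw [key, ← mul_assoc, inv_mul_cancel₀ hdE, one_mul]
  have hΦA : ∀ y : ℕ → E, (∀ j, j < d → (y j) ^ q = ζ ^ j * y j) → ∀ i, i < d →
      AMap q d ω i (∑ j ∈ Finset.range d, algebraMap F E ((d : F)⁻¹ * ω ^ j) * y j) = y i := by
    intro y hy i hi
    rw [hAsum]
    have hterm : ∀ j ∈ Finset.range d,
        AMap q d ω i (algebraMap F E ((d : F)⁻¹ * ω ^ j) * y j)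
          = algebraMap F E ((d : F)⁻¹ * ω ^ j) *
              (if i = j then (d : E) * ζ ^ (j * (d - 1)) * y j else 0) := by
      intro j hj
      rw [Finset.mem_range] at hj
      rw [hAsmul, hAV i hi j hj (y j) (hy j hj)]
    rw [Finset.sum_congr rfl hterm]
    rw [Finset.sum_eq_single_of_mem i (Finset.mem_range.mpr hi)
        (fun j hj hji => by rw [if_neg fun h => hji h.symm, mul_zero])]
    rw [if_pos rfl, map_mul, map_inv₀, map_natCast, map_pow, ← hζdef]
    have hζi : ζ ^ i * ζ ^ (i * (d - 1)) = 1 := by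
      rw [← pow_add, show i + i * (d - 1) = i * (d - 1 + 1) from by ring,
        Nat.sub_add_cancel (by omega), mul_comm i d, pow_mul, hζd, one_pow]
    calc (d : E)⁻¹ * ζ ^ i * ((d : E) * ζ ^ (i * (d - 1)) * y i)
        = ((d : E)⁻¹ * (d : E)) * (ζ ^ i * ζ ^ (i * (d - 1))) * y i := by ring
      _ = y i := by rw [inv_mul_cancel₀ hdE, hζi, one_mul, one_mul]
  have hU : ∀ w : ℕ → E, (∀ j, j < d → (w j) ^ q = ζ ^ j * w j) →
      (∑ j ∈ Finset.range d, w j) = 0 → ∀ j, j < d → w j = 0 := by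
    intro w hw hsum j hj
    have h1 : AMap q d ω j (∑ j' ∈ Finset.range d, w j') = (d : E) * ζ ^ (j * (d - 1)) * w j := by
      rw [hAsum]
      have ht : ∀ j' ∈ Finset.range d, AMap q d ω j (w j')
          = if j = j' then (d : E) * ζ ^ (j' * (d - 1)) * w j' else 0 := fun j' hj' =>
        hAV j hj j' (Finset.mem_range.mp hj') (w j') (hw j' (Finset.mem_range.mp hj'))
      rw [Finset.sum_congr rfl ht]
      rw [Finset.sum_eq_single_of_mem j (Finset.mem_range.mpr hj)
        (fun j' _ hjj => if_neg fun h => hjj h.symm)]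
      rw [if_pos rfl]
    rw [hsum, hA0] at h1
    have h2 := h1.symm
    rcases mul_eq_zero.mp h2 with h3 | h3
    · rcases mul_eq_zero.mp h3 with h4 | h4
      · exact absurd h4 hdE
      · exact absurd h4 (pow_ne_zero _ hζ0)
    · exact h3
  have hVex : ∀ j, j < d → ∃ w : E, w ^ q = ζ ^ j * w ∧ w ≠ 0 := by
    set Vset : ℕ → Finset E := fun j => Finset.univ.filter (fun x : E => x ^ q = ζ ^ j * x)
      with hVset
    have hcardV : ∀ j : ℕ, (Vset j).card ≤ q := by
      intro j
      set P : Polynomial E := Polynomial.X ^ q - Polynomial.C (ζ ^ j) * Polynomial.X with hP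
      have hdegC : (Polynomial.C (ζ ^ j) * Polynomial.X).natDegree
          < ((Polynomial.X : Polynomial E) ^ q).natDegree := by
        rw [Polynomial.natDegree_X_pow]
        calc (Polynomial.C (ζ ^ j) * Polynomial.X).natDegree
            ≤ Polynomial.X.natDegree := Polynomial.natDegree_C_mul_le _ _
          _ = 1 := Polynomial.natDegree_X
          _ < q := by omega
      have hdeg : P.natDegree = q := by
        rw [hP, Polynomial.natDegree_sub_eq_left_of_natDegree_lt hdegC,
          Polynomial.natDegree_X_pow]
      have hP0 : P ≠ 0 := fun h => by rw [h, Polynomial.natDegree_zero] at hdeg; omega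
      have hsub : Vset j ⊆ P.roots.toFinset := by
        intro x hx
        rw [hVset, Finset.mem_filter] at hx
        rw [Multiset.mem_toFinset, Polynomial.mem_roots']
        refine ⟨hP0, ?_⟩
        show P.eval x = 0
        rw [hP]
        simp [hx.2]
      calc (Vset j).card ≤ P.roots.toFinset.card := Finset.card_le_card hsub
        _ ≤ Multiset.card P.roots := Multiset.toFinset_card_le _
        _ ≤ P.natDegree := Polynomial.card_roots' P
        _ = q := hdeg
    have hinj2 : Function.Injective (fun x : E => fun j : Fin d =>
        (⟨AMap q d ω (j : ℕ) x,
          Finset.mem_filter.mpr ⟨Finset.mem_univ _, hAmem (j : ℕ) x⟩⟩ :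
          {y // y ∈ Vset (j : ℕ)})) := by
      intro x x' h
      have hxx : ∀ i ∈ Finset.range d, ζ ^ i * AMap q d ω i x = ζ ^ i * AMap q d ω i x' := by
        intro i hi
        rw [Finset.mem_range] at hi
        have h2 := congrFun h ⟨i, hi⟩
        rw [Subtype.mk.injEq] at h2
        rw [h2]
      rw [← hrecon x, ← hrecon x', Finset.sum_congr rfl hxx]
    have hcards : q ^ d ≤ ∏ j : Fin d, (Vset (j : ℕ)).card := by
      calc q ^ d = Fintype.card E := hE.symm
        _ ≤ Fintype.card (∀ j : Fin d, {y // y ∈ Vset (j : ℕ)}) :=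
            Fintype.card_le_of_injective _ hinj2
        _ = ∏ j : Fin d, Fintype.card {y // y ∈ Vset (j : ℕ)} := Fintype.card_pi
        _ = ∏ j : Fin d, (Vset (j : ℕ)).card := by
            exact Finset.prod_congr rfl fun j _ => Fintype.card_coe _
    intro j hj
    have h1 : (∏ j' : Fin d, (Vset (j' : ℕ)).card)
        = (Vset j).card * ∏ j' ∈ Finset.univ.erase (⟨j, hj⟩ : Fin d), (Vset (j' : ℕ)).card :=
      (Finset.mul_prod_erase Finset.univ _ (Finset.mem_univ (⟨j, hj⟩ : Fin d))).symm
    have h2 : (∏ j' ∈ Finset.univ.erase (⟨j, hj⟩ : Fin d), (Vset (j' : ℕ)).card) ≤ q ^ (d - 1) := by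
      calc (∏ j' ∈ Finset.univ.erase (⟨j, hj⟩ : Fin d), (Vset (j' : ℕ)).card)
          ≤ ∏ j' ∈ Finset.univ.erase (⟨j, hj⟩ : Fin d), q :=
            Finset.prod_le_prod' fun i _ => hcardV (i : ℕ)
        _ = q ^ (d - 1) := by
            rw [Finset.prod_const, Finset.card_erase_of_mem (Finset.mem_univ _),
              Finset.card_univ, Fintype.card_fin]
    have h3 : q * q ^ (d - 1) ≤ (Vset j).card * q ^ (d - 1) := by
      have e : q * q ^ (d - 1) = q ^ d := by
        rw [← pow_succ', Nat.sub_add_cancel (by omega)]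
      rw [e]
      calc q ^ d ≤ ∏ j' : Fin d, (Vset (j' : ℕ)).card := hcards
        _ = (Vset j).card * ∏ j' ∈ Finset.univ.erase (⟨j, hj⟩ : Fin d), (Vset (j' : ℕ)).card := h1
        _ ≤ (Vset j).card * q ^ (d - 1) := Nat.mul_le_mul_left _ h2
    have h4 : q ≤ (Vset j).card := Nat.le_of_mul_le_mul_right
      (by rwa [mul_comm q _, mul_comm (Vset j).card _] at h3) (pow_pos hq0 _)
    obtain ⟨a, ha, b, hb, hab⟩ := Finset.one_lt_card.mp (by omega : 1 < (Vset j).card)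
    rcases eq_or_ne a 0 with rfl | ha0
    · exact ⟨b, (Finset.mem_filter.mp hb).2, fun h => hab h.symm⟩
    · exact ⟨a, (Finset.mem_filter.mp ha).2, ha0⟩
  have hV0 : ∀ j : ℕ, (0 : E) ^ q = ζ ^ j * 0 := by
    intro j
    rw [zero_pow (by omega : q ≠ 0), mul_zero]
  have hVsum : ∀ (j : ℕ) (s : Finset ℕ) (g : ℕ → E), (∀ i ∈ s, (g i) ^ q = ζ ^ j * g i) →
      (∑ i ∈ s, g i) ^ q = ζ ^ j * ∑ i ∈ s, g i := by
    intro j s g hg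
    obtain ⟨φ, hφ0⟩ := hfrob 1
    have hφ : ∀ z : E, φ z = z ^ q := fun z => by rw [hφ0, pow_one]
    rw [← hφ, map_sum, Finset.mul_sum]
    exact Finset.sum_congr rfl fun i hi => by rw [hφ, hg i hi]
  have hVsub : ∀ (j : ℕ) (z w : E), z ^ q = ζ ^ j * z → w ^ q = ζ ^ j * w →
      (z - w) ^ q = ζ ^ j * (z - w) := by
    intro j z w hz hw
    obtain ⟨φ, hφ0⟩ := hfrob 1
    have hφ : ∀ z : E, φ z = z ^ q := fun z => by rw [hφ0, pow_one]
    rw [← hφ, map_sub, hφ, hφ, hz, hw, mul_sub]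
  have hVsmul : ∀ (j : ℕ) (a : F) (z : E), z ^ q = ζ ^ j * z →
      (algebraMap F E a * z) ^ q = ζ ^ j * (algebraMap F E a * z) := by
    intro j a z hz
    rw [mul_pow, halg1, hz]
    ring
  have hVpow : ∀ (j mm : ℕ) (x : E), x ^ q = ζ ^ j * x →
      (x ^ mm) ^ q = ζ ^ (j * mm % d) * x ^ mm := by
    intro j mm x hx
    rw [pow_right_comm, hx, mul_pow, ← pow_mul, ← hζord, pow_mod_orderOf]
  have hpowinj : ∀ (j mm : ℕ), 0 < mm → Nat.gcd mm (q - 1) = 1 → ∀ z w : E,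
      z ^ q = ζ ^ j * z → w ^ q = ζ ^ j * w → z ^ mm = w ^ mm → z = w := by
    intro j mm hmm hgcd z w hz hw hzw
    rcases eq_or_ne w 0 with rfl | hw0
    · rw [zero_pow hmm.ne'] at hzw
      exact pow_eq_zero_iff hmm.ne' |>.mp hzw
    · have hz0 : z ≠ 0 := by
        intro h
        rw [h, zero_pow hmm.ne'] at hzw
        exact hw0 (pow_eq_zero_iff hmm.ne' |>.mp hzw.symm)
      have ht1 : (z / w) ^ q = z / w := by
        rw [div_pow, hz, hw, mul_div_mul_left _ _ (pow_ne_zero j hζ0)]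
      have htm : (z / w) ^ mm = 1 := by
        rw [div_pow, hzw, div_self (pow_ne_zero _ hw0)]
      have ht0 : z / w ≠ 0 := div_ne_zero hz0 hw0
      have htq1 : (z / w) ^ (q - 1) = 1 := by
        have h6 : (z / w) ^ (q - 1) * (z / w) = 1 * (z / w) := by
          rw [one_mul, ← pow_succ, Nat.sub_add_cancel (by omega), ht1]
        exact mul_right_cancel₀ ht0 h6
      have h5 : orderOf (z / w) ∣ Nat.gcd mm (q - 1) :=
        Nat.dvd_gcd (orderOf_dvd_of_pow_eq_one htm) (orderOf_dvd_of_pow_eq_one htq1)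
      rw [hgcd, Nat.dvd_one] at h5
      have h7 : z / w = 1 := orderOf_eq_one_iff.mp h5
      rwa [div_eq_one_iff_eq hw0] at h7
  constructor
  · -- bijective → conditions
    intro hbij
    have hinj := hbij.1
    have hsurj := hbij.2
    have hfval : ∀ y : ℕ → E, (∀ j, j < d → (y j) ^ q = ζ ^ j * y j) →
        (∑ i ∈ Finset.range d, algebraMap F E (u i) *
          (AMap q d ω i (∑ j ∈ Finset.range d, algebraMap F E ((d : F)⁻¹ * ω ^ j) * y j)) ^ m i)
        = ∑ i ∈ Finset.range d, algebraMap F E (u i) * (y i) ^ m i :=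
      fun y hy => Finset.sum_congr rfl fun i hi => by
        rw [hΦA y hy i (Finset.mem_range.mp hi)]
    have hsep : ∀ y y' : ℕ → E, (∀ j, j < d → (y j) ^ q = ζ ^ j * y j) →
        (∀ j, j < d → (y' j) ^ q = ζ ^ j * y' j) →
        (∑ i ∈ Finset.range d, algebraMap F E (u i) * (y i) ^ m i)
          = (∑ i ∈ Finset.range d, algebraMap F E (u i) * (y' i) ^ m i) →
        ∀ j, j < d → y j = y' j := by
      intro y y' hy hy' heq j hj
      have h1 : (∑ j' ∈ Finset.range d, algebraMap F E ((d : F)⁻¹ * ω ^ j') * y j')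
          = ∑ j' ∈ Finset.range d, algebraMap F E ((d : F)⁻¹ * ω ^ j') * y' j' := by
        apply hinj
        show (∑ i ∈ Finset.range d, algebraMap F E (u i) *
            (AMap q d ω i (∑ j' ∈ Finset.range d, algebraMap F E ((d : F)⁻¹ * ω ^ j') * y j')) ^ m i)
          = ∑ i ∈ Finset.range d, algebraMap F E (u i) *
            (AMap q d ω i (∑ j' ∈ Finset.range d, algebraMap F E ((d : F)⁻¹ * ω ^ j') * y' j')) ^ m i
        rw [hfval y hy, hfval y' hy', heq]
      have h2 := congrArg (AMap q d ω j) h1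
      rw [hΦA y hy j hj, hΦA y' hy' j hj] at h2
      exact h2
    have hune : ∀ i, i < d → u i ≠ 0 := by
      intro i₀ hi₀ hu0
      obtain ⟨w, hwV, hw0⟩ := hVex i₀ hi₀
      set y : ℕ → E := fun j => if j = i₀ then w else 0 with hy
      have hymem : ∀ j, j < d → (y j) ^ q = ζ ^ j * y j := by
        intro j hj
        simp only [hy]
        by_cases h : j = i₀
        · rw [if_pos h, h]
          exact hwV
        · rw [if_neg h]
          exact hV0 j
      have h0mem : ∀ j, j < d → ((fun _ => (0 : E)) j) ^ q = ζ ^ j * (fun _ => (0 : E)) j :=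
        fun j _ => hV0 j
      have heq : (∑ i ∈ Finset.range d, algebraMap F E (u i) * (y i) ^ m i)
          = ∑ i ∈ Finset.range d, algebraMap F E (u i) * ((fun _ => (0 : E)) i) ^ m i := by
        refine Finset.sum_congr rfl fun i hi => ?_
        rw [Finset.mem_range] at hi
        by_cases h : i = i₀
        · subst h
          rw [hu0, map_zero, zero_mul, zero_mul]
        · simp only [hy, if_neg h]
      have h3 := hsep y (fun _ => 0) hymem h0mem heq i₀ hi₀
      simp only [hy, if_pos rfl] at h3
      exact hw0 h3
    have hgcd1 : ∀ i, i < d → Nat.gcd (m i) (q - 1) = 1 := by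
      intro i₀ hi₀
      by_contra hgne
      set gd := Nat.gcd (m i₀) (q - 1) with hgd
      have hgdvd : gd ∣ q - 1 := Nat.gcd_dvd_right _ _
      have hgd0 : gd ≠ 0 := by
        intro h
        have := Nat.eq_zero_of_gcd_eq_zero_right (hgd ▸ h)
        omega
      have hgd1 : 1 < gd := by omega
      have hcardU : Fintype.card Fˣ = q - 1 := by rw [Fintype.card_units, hF]
      obtain ⟨g, hgen⟩ := IsCyclic.exists_generator (α := Fˣ)
      have hordg : orderOf g = q - 1 := by
        rw [orderOf_eq_card_of_forall_mem_zpowers hgen, Nat.card_eq_fintype_card, hcardU]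
      set c : Fˣ := g ^ ((q - 1) / gd) with hc
      have hordc : orderOf c = gd := by
        rw [hc, orderOf_pow, hordg, Nat.gcd_eq_right (Nat.div_dvd_of_dvd hgdvd),
          Nat.div_div_self hgdvd (by omega)]
      have hcm : c ^ m i₀ = 1 := orderOf_dvd_iff_pow_eq_one.mp
        (by rw [hordc]; exact Nat.gcd_dvd_left _ _)
      have hcmF : ((c : F)) ^ m i₀ = 1 := by
        rw [← Units.val_pow_eq_pow_val, hcm, Units.val_one]
      have hcne1 : (c : F) ≠ 1 := by
        intro h
        have h4 : c = 1 := Units.ext h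
        rw [h4, orderOf_one] at hordc
        omega
      obtain ⟨w, hwV, hw0⟩ := hVex i₀ hi₀
      set y : ℕ → E := fun j => if j = i₀ then w else 0 with hy
      set y' : ℕ → E := fun j => if j = i₀ then algebraMap F E (c : F) * w else 0 with hy'
      have hymem : ∀ j, j < d → (y j) ^ q = ζ ^ j * y j := by
        intro j hj
        simp only [hy]
        by_cases h : j = i₀
        · rw [if_pos h, h]; exact hwV
        · rw [if_neg h]; exact hV0 j
      have hymem' : ∀ j, j < d → (y' j) ^ q = ζ ^ j * y' j := by
        intro j hj
        simp only [hy']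
        by_cases h : j = i₀
        · rw [if_pos h, h]
          exact hVsmul i₀ _ _ hwV
        · rw [if_neg h]; exact hV0 j
      have heq : (∑ i ∈ Finset.range d, algebraMap F E (u i) * (y i) ^ m i)
          = ∑ i ∈ Finset.range d, algebraMap F E (u i) * (y' i) ^ m i := by
        refine Finset.sum_congr rfl fun i hi => ?_
        rw [Finset.mem_range] at hi
        by_cases h : i = i₀
        · subst h
          simp only [hy, hy', if_pos rfl]
          rw [mul_pow, ← map_pow, hcmF, map_one, one_mul]
        · simp only [hy, hy', if_neg h]
      have h3 := hsep y y' hymem hymem' heq i₀ hi₀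
      simp only [hy, hy', if_pos rfl] at h3
      have h5 : (algebraMap F E (c : F) - 1) * w = 0 := by
        rw [sub_mul, one_mul, ← h3, sub_self]
      rcases mul_eq_zero.mp h5 with h6 | h6
      · rw [sub_eq_zero] at h6
        have : (c : F) = 1 := hinjFE (by rw [h6, map_one])
        exact hcne1 this
      · exact hw0 h6
    have himg : ((Finset.range d).image fun i => i * m i % d) = Finset.range d := by
      apply Finset.Subset.antisymm
      · intro j hj
        rw [Finset.mem_image] at hj
        obtain ⟨i, hi, rfl⟩ := hj
        exact Finset.mem_range.mpr (Nat.mod_lt _ hd0)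
      · intro j₀ hj₀'
        rw [Finset.mem_range] at hj₀'
        by_contra hj0T
        obtain ⟨w, hwV, hw0⟩ := hVex j₀ hj₀'
        obtain ⟨x, hx⟩ := hsurj w
        have hx' : (∑ i ∈ Finset.range d, algebraMap F E (u i) * (AMap q d ω i x) ^ m i) = w := hx
        set Wt : ℕ → E := fun j =>
          (∑ i ∈ (Finset.range d).filter (fun i => i * m i % d = j),
            algebraMap F E (u i) * (AMap q d ω i x) ^ m i) - (if j = j₀ then w else 0) with hWt
        have hWtmem : ∀ j, j < d → (Wt j) ^ q = ζ ^ j * Wt j := by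
          intro j hj
          refine hVsub j _ _ ?_ ?_
          · refine hVsum j _ _ fun i hi => ?_
            rw [Finset.mem_filter] at hi
            refine hVsmul j _ _ ?_
            rw [← hi.2]
            exact hVpow i (m i) _ (hAmem i x)
          · by_cases h : j = j₀
            · rw [if_pos h, h]
              exact hwV
            · rw [if_neg h]
              exact hV0 j
        have hWtsum : ∑ j ∈ Finset.range d, Wt j = 0 := by
          simp only [hWt]
          rw [Finset.sum_sub_distrib, Finset.sum_fiberwise_of_maps_to
            (fun i _ => Finset.mem_range.mpr (Nat.mod_lt _ hd0)), hx',
            Finset.sum_ite_eq' (Finset.range d) j₀ (fun _ => w),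
            if_pos (Finset.mem_range.mpr hj₀'), sub_self]
        have h9 := hU Wt hWtmem hWtsum j₀ hj₀'
        simp only [hWt] at h9
        have hfe : (Finset.range d).filter (fun i => i * m i % d = j₀) = ∅ := by
          rw [Finset.filter_eq_empty_iff]
          intro i hi hcon
          exact hj0T (Finset.mem_image.mpr ⟨i, hi, hcon⟩)
        rw [hfe, Finset.sum_empty, zero_sub, neg_eq_zero] at h9
        exact hw0 h9
    exact ⟨himg, Finset.prod_ne_zero_iff.mpr (fun i hi => hune i (Finset.mem_range.mp hi)),
      Nat.Coprime.prod_left (fun i hi => hgcd1 i (Finset.mem_range.mp hi))⟩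
  · -- conditions → bijective
    rintro ⟨hT, hu, hgcd⟩
    have hu' : ∀ i ∈ Finset.range d, u i ≠ 0 := Finset.prod_ne_zero_iff.mp hu
    have hgcd' : ∀ i ∈ Finset.range d, Nat.gcd (m i) (q - 1) = 1 := fun i hi =>
      Nat.Coprime.coprime_dvd_left (Finset.dvd_prod_of_mem m hi) hgcd
    have hτinj : Set.InjOn (fun i => i * m i % d) (Finset.range d) :=
      Finset.injOn_of_card_image_eq (by rw [hT, Finset.card_range])
    rw [← Finite.injective_iff_bijective]
    intro x x' hxx
    have hxx' : (∑ i ∈ Finset.range d, algebraMap F E (u i) * (AMap q d ω i x) ^ m i)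
        = ∑ i ∈ Finset.range d, algebraMap F E (u i) * (AMap q d ω i x') ^ m i := hxx
    set W : ℕ → E := fun j => ∑ i ∈ (Finset.range d).filter (fun i => i * m i % d = j),
      (algebraMap F E (u i) * (AMap q d ω i x) ^ m i
        - algebraMap F E (u i) * (AMap q d ω i x') ^ m i) with hW
    have hWmem : ∀ j, j < d → (W j) ^ q = ζ ^ j * W j := by
      intro j hj
      refine hVsum j _ _ fun i hi => ?_
      rw [Finset.mem_filter] at hi
      refine hVsub j _ _ ?_ ?_
      · refine hVsmul j _ _ ?_
        rw [← hi.2]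
        exact hVpow i (m i) _ (hAmem i x)
      · refine hVsmul j _ _ ?_
        rw [← hi.2]
        exact hVpow i (m i) _ (hAmem i x')
    have hWsum : ∑ j ∈ Finset.range d, W j = 0 := by
      rw [hW, Finset.sum_fiberwise_of_maps_to
        (fun i hi => Finset.mem_range.mpr (Nat.mod_lt _ hd0)), Finset.sum_sub_distrib,
        hxx', sub_self]
    have hW0 := hU W hWmem hWsum
    have hyy : ∀ i, i < d → AMap q d ω i x = AMap q d ω i x' := by
      intro i hi
      have hfil : (Finset.range d).filter (fun i' => i' * m i' % d = i * m i % d) = {i} := by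
        apply Finset.eq_singleton_iff_unique_mem.mpr
        refine ⟨Finset.mem_filter.mpr ⟨Finset.mem_range.mpr hi, rfl⟩, fun j hj => ?_⟩
        rw [Finset.mem_filter] at hj
        exact hτinj (Finset.mem_coe.mpr hj.1) (Finset.mem_coe.mpr (Finset.mem_range.mpr hi)) hj.2
      have h8 := hW0 (i * m i % d) (Nat.mod_lt _ hd0)
      simp only [hW] at h8
      rw [hfil, Finset.sum_singleton, sub_eq_zero] at h8
      have h9 : (AMap q d ω i x) ^ m i = (AMap q d ω i x') ^ m i :=
        mul_left_cancel₀ ((map_ne_zero _).mpr (hu' i (Finset.mem_range.mpr hi))) h8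
      exact hpowinj i (m i) (hm i hi) (hgcd' i (Finset.mem_range.mpr hi)) _ _
        (hAmem i x) (hAmem i x') h9
    rw [← hrecon x, ← hrecon x']
    exact congrArg _ (Finset.sum_congr rfl fun i hi => by
      rw [hyy i (Finset.mem_range.mp hi)])
end

section
/- Let m₀, …, m_{d−1} be positive integers and u₀, …, u_{d−1} ∈ F^× such that {i·m_i mod d : 0 ≤ i ≤ d − 1} is a complete residue system modulo d and gcd(m₀·⋯·m_{d−1}, q − 1) = 1, so that f(x) = Σ_{i=0}^{d−1} u_i · A_i(x)^{m_i} is a bijection of E. For each i let r_i be a positive integer with m_i·r_i ≡ 1 (mod d(q − 1)), and let j(i) be the unique index 0 ≤ j(i) ≤ d − 1 with j(i) ≡ i·m_i (mod d). Then the compositional inverse of f is g(x) = (1/d) · Σ_{i=0}^{d−1} ω^i · (d·u_i·ω^{−j(i)})^{−r_i} · A_{j(i)}(x)^{r_i}; that is, g(f(x)) = x for all x ∈ E. -/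
lemma geom_sum_orderOf {E : Type*} [Field E] {Ω : E} {d : ℕ} (hΩ : orderOf Ω = d)
    (t : ℕ) : ∑ k ∈ Finset.range d, (Ω ^ t) ^ k = if d ∣ t then (d : E) else 0 := by
  by_cases h : d ∣ t
  · have h1 : Ω ^ t = 1 := orderOf_dvd_iff_pow_eq_one.mp (hΩ ▸ h)
    simp [h, h1]
  · have h1 : Ω ^ t ≠ 1 := fun hh => h (hΩ ▸ orderOf_dvd_iff_pow_eq_one.mpr hh)
    rw [if_neg h, geom_sum_eq h1]
    have hΩd : Ω ^ d = 1 := by rw [← hΩ]; exact pow_orderOf_eq_one Ω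
    have : (Ω ^ t) ^ d = 1 := by
      rw [← pow_mul, mul_comm, pow_mul, hΩd, one_pow]
    simp [this]

theorem inverse_of_sum_AMap_pow
    (q d : ℕ) (hd : 1 < d) (hq : q % d = 1)
    (F E : Type*) [Field F] [Field E] [Algebra F E] [Fintype F] [Fintype E]
    (hF : Fintype.card F = q) (hE : Fintype.card E = q ^ d)
    (ω : F) (hω : orderOf ω = d)
    (m : ℕ → ℕ) (hm : ∀ i < d, 0 < m i)
    (u : ℕ → F) (hu : ∀ i < d, u i ≠ 0)
    (hres : ((Finset.range d).image fun i => i * m i % d) = Finset.range d)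
    (hgcd : Nat.gcd (∏ i ∈ Finset.range d, m i) (q - 1) = 1)
    (r : ℕ → ℕ) (hr : ∀ i < d, 0 < r i ∧ m i * r i ≡ 1 [MOD d * (q - 1)])
    (j : ℕ → ℕ) (hj : ∀ i < d, j i < d ∧ j i ≡ i * m i [MOD d]) :
    ∀ x : E,
      (d : E)⁻¹ *
        ∑ i ∈ Finset.range d,
          (algebraMap F E ω) ^ i *
            ((d : E) * algebraMap F E (u i) * ((algebraMap F E ω) ^ (j i))⁻¹)⁻¹ ^ (r i) *
            (AMap q d ω (j i)
              (∑ k ∈ Finset.range d, algebraMap F E (u k) * (AMap q d ω k x) ^ (m k))) ^ (r i)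
        = x := by
  intro x
  set Ω : E := algebraMap F E ω with hΩdef
  have halg : Function.Injective (algebraMap F E) := (algebraMap F E).injective
  -- basic numerics
  have hd0 : 0 < d := by omega
  have hq2 : 2 ≤ q := by
    have := Fintype.one_lt_card (α := F)
    omega
  have hdq : d ∣ q - 1 := ⟨q / d, by have := Nat.div_add_mod q d; omega⟩
  -- characteristic
  obtain ⟨p, hpc⟩ := CharP.exists F
  haveI := hpc
  obtain ⟨n, hp, hqpn⟩ := FiniteField.card F p
  rw [hF] at hqpn
  haveI : CharP E p := charP_of_injective_algebraMap halg p
  haveI : ExpChar E p := ExpChar.prime hp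
  have hpd : ¬ p ∣ d := by
    intro hpdvd
    have h1 : p ∣ q - 1 := hpdvd.trans hdq
    have h2 : p ∣ q := hqpn ▸ dvd_pow_self p n.pos.ne'
    have h3 : p ∣ 1 := (Nat.sub_sub_self (by omega : 1 ≤ q)) ▸ Nat.dvd_sub h2 h1
    exact hp.one_lt.ne' (Nat.dvd_one.mp h3)
  have hdE : (d : E) ≠ 0 := by
    rw [Ne, CharP.cast_eq_zero_iff E p d]
    exact hpd
  -- order of Ω
  have hΩord : orderOf Ω = d := by
    rw [hΩdef]
    have h := orderOf_injective (algebraMap F E).toMonoidHom halg ω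
    rw [hω] at h
    exact h
  have hΩd1 : Ω ^ d = 1 := by rw [← hΩord]; exact pow_orderOf_eq_one Ω
  have hΩne : Ω ≠ 0 := by
    intro h
    rw [h, zero_pow hd0.ne'] at hΩd1
    exact one_ne_zero hΩd1.symm
  -- the q-power maps are additive
  have hfrob : ∀ (s : Finset ℕ) (g : ℕ → E) (t : ℕ),
      (∑ k ∈ s, g k) ^ q ^ t = ∑ k ∈ s, g k ^ q ^ t := by
    intro s g t
    have hqt : q ^ t = p ^ (n * t) := by rw [hqpn, pow_mul]
    rw [hqt]
    have := map_sum (iterateFrobenius E p (n * t)) g s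
    simpa only [iterateFrobenius_def] using this
  have hxqd : ∀ y : E, y ^ q ^ d = y := by
    intro y
    rw [← hE]; exact FiniteField.pow_card y
  have hcF : ∀ c : F, (algebraMap F E c) ^ q = algebraMap F E c := by
    intro c
    rw [← map_pow, ← hF, FiniteField.pow_card]
  have hΩq : Ω ^ q = Ω := hcF ω
  -- eigenproperty of AMap
  have eigenA : ∀ (i : ℕ) (y : E), (AMap q d ω i y) ^ q = Ω ^ i * AMap q d ω i y := by
    intro i y
    unfold AMap
    rw [← hΩdef]
    have hq1 : (∑ k ∈ Finset.range d, Ω ^ (i * k) * y ^ q ^ (d - 1 - k)) ^ q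
        = ∑ k ∈ Finset.range d, (Ω ^ (i * k) * y ^ q ^ (d - 1 - k)) ^ q := by
      have := hfrob (Finset.range d) (fun k => Ω ^ (i * k) * y ^ q ^ (d - 1 - k)) 1
      simpa [pow_one] using this
    rw [hq1]
    have hL : ∀ k ∈ Finset.range d, (Ω ^ (i * k) * y ^ q ^ (d - 1 - k)) ^ q
        = Ω ^ (i * k) * y ^ q ^ (d - k) := by
      intro k hk
      rw [Finset.mem_range] at hk
      rw [mul_pow, ← pow_mul, mul_comm (i * k) q, pow_mul, hΩq, ← pow_mul, ← pow_succ,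
        show d - 1 - k + 1 = d - k from by omega]
    rw [Finset.sum_congr rfl hL, Finset.mul_sum]
    obtain ⟨e, rfl⟩ : ∃ e, d = e + 1 := ⟨d - 1, by omega⟩
    rw [Finset.sum_range_succ' (fun k => Ω ^ (i * k) * y ^ q ^ (e + 1 - k)) e]
    rw [Finset.sum_range_succ (fun k => Ω ^ i * (Ω ^ (i * k) * y ^ q ^ (e + 1 - 1 - k))) e]
    congr 1
    · apply Finset.sum_congr rfl
      intro k hk
      rw [Finset.mem_range] at hk
      rw [← mul_assoc, ← pow_add, show i + i * k = i * (k + 1) from by ring,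
        show e + 1 - 1 - k = e + 1 - (k + 1) from by omega]
    · show Ω ^ (i * 0) * y ^ q ^ (e + 1 - 0) = Ω ^ i * (Ω ^ (i * e) * y ^ q ^ (e + 1 - 1 - e))
      rw [show e + 1 - 1 - e = 0 from by omega, Nat.sub_zero, pow_zero, pow_one,
        Nat.mul_zero, pow_zero, one_mul, hxqd, ← mul_assoc, ← pow_add,
        show i + i * e = i * (e + 1) from by ring, mul_comm i (e + 1), pow_mul, hΩd1,
        one_pow, one_mul]
  -- eigenvectors iterate
  have eigen_iter : ∀ (y : E) (l : ℕ), y ^ q = Ω ^ l * y →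
      ∀ t : ℕ, y ^ q ^ t = Ω ^ (l * t) * y := by
    intro y l hy t
    induction t with
    | zero => simp
    | succ t ih =>
      rw [pow_succ, pow_mul, ih, mul_pow, hy]
      have h1 : (Ω ^ (l * t)) ^ q = Ω ^ (l * t) := by
        rw [← pow_mul, mul_comm (l * t) q, pow_mul, hΩq]
      rw [h1, ← mul_assoc, ← pow_add, show l * t + l = l * (t + 1) from by ring]
  -- divisibility criterion
  have dvd_iff : ∀ jj l : ℕ, (d ∣ jj + l * (d - 1)) ↔ jj ≡ l [MOD d] := by
    intro jj l
    rw [← ZMod.natCast_eq_zero_iff _ d, ← ZMod.natCast_eq_natCast_iff _ _ d]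
    push_cast
    have hcast : ((d - 1 : ℕ) : ZMod d) = (d : ZMod d) - 1 := by
      have h1 : (1 : ℕ) ≤ d := hd0
      push_cast [Nat.cast_sub h1]
      ring
    rw [hcast, ZMod.natCast_self]
    constructor <;> intro h <;> linear_combination h
  -- value of AMap on eigenvectors
  have AMap_eigen : ∀ (y : E) (l jjj : ℕ), y ^ q = Ω ^ l * y →
      AMap q d ω jjj y
        = (if d ∣ jjj + l * (d - 1) then (d : E) else 0) * Ω ^ (l * (d - 1)) * y := by
    intro y l jjj hy
    unfold AMap
    rw [← hΩdef]
    have hterm : ∀ k ∈ Finset.range d,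
        Ω ^ (jjj * k) * y ^ q ^ (d - 1 - k)
        = Ω ^ (l * (d - 1)) * ((Ω ^ (jjj + l * (d - 1))) ^ k * y) := by
      intro k hk
      rw [Finset.mem_range] at hk
      rw [eigen_iter y l hy (d - 1 - k)]
      have hexp : l * (d - 1 - k) + d * (l * k) = l * (d - 1) * (k + 1) := by
        obtain ⟨c, hc⟩ := Nat.le.dest (by omega : k ≤ d - 1)
        rw [show d - 1 - k = c from by omega, show d - 1 = k + c from by omega,
          show d = k + c + 1 from by omega]
        ring
      have hΩeq : Ω ^ (l * (d - 1 - k)) = Ω ^ (l * (d - 1) * (k + 1)) := by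
        rw [← hexp, pow_add,
          show Ω ^ (d * (l * k)) = 1 from by rw [pow_mul, hΩd1, one_pow], mul_one]
      rw [hΩeq]
      calc Ω ^ (jjj * k) * (Ω ^ (l * (d - 1) * (k + 1)) * y)
          = Ω ^ (jjj * k + l * (d - 1) * (k + 1)) * y := by rw [pow_add]; ring
        _ = Ω ^ (l * (d - 1) + (jjj + l * (d - 1)) * k) * y := by
            congr 2; ring
        _ = Ω ^ (l * (d - 1)) * ((Ω ^ (jjj + l * (d - 1))) ^ k * y) := by
            rw [pow_add, pow_mul]; ring
    rw [Finset.sum_congr rfl hterm, ← Finset.mul_sum, ← Finset.sum_mul,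
      geom_sum_orderOf hΩord]
    ring
  -- the summands of f are eigenvectors
  have eigz : ∀ k : ℕ,
      (algebraMap F E (u k) * (AMap q d ω k x) ^ m k) ^ q
        = Ω ^ (k * m k) * (algebraMap F E (u k) * (AMap q d ω k x) ^ m k) := by
    intro k
    rw [mul_pow, hcF, ← pow_mul, mul_comm (m k) q, pow_mul, eigenA, mul_pow, ← pow_mul]
    ring
  -- injectivity of i ↦ i * m i mod d
  have hinj : Set.InjOn (fun i => i * m i % d) (Finset.range d) := by
    apply Finset.card_image_iff.mp
    rw [hres]
  -- power identity for eigenvectors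
  have pow_eigen : ∀ (y : E) (l N : ℕ), y ^ q = Ω ^ l * y → N ≡ 1 [MOD d * (q - 1)] →
      y ^ N = y := by
    intro y l N hy hN
    have hM1 : 1 < d * (q - 1) := by
      have h1 : 2 * 1 ≤ d * (q - 1) := Nat.mul_le_mul (by omega) (by omega)
      omega
    have hN1 : 1 ≤ N := by
      have h1 : N % (d * (q - 1)) = 1 % (d * (q - 1)) := hN
      rw [Nat.mod_eq_of_lt hM1] at h1
      have := Nat.mod_le N (d * (q - 1))
      omega
    obtain ⟨t, ht⟩ := (Nat.modEq_iff_dvd' hN1).mp hN.symm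
    have hNt : N = 1 + d * (q - 1) * t := by omega
    by_cases hy0 : y = 0
    · subst hy0
      rw [zero_pow (by omega : N ≠ 0)]
    · have harith : d * (q - 1) + d = d * q := by
        obtain ⟨c, rfl⟩ : ∃ c, q = c + 1 := ⟨q - 1, by omega⟩
        simp only [Nat.add_sub_cancel]
        ring
      have hyM : y ^ (d * (q - 1)) = 1 := by
        have h1 : y ^ (d * (q - 1)) * y ^ d = 1 * y ^ d := by
          rw [one_mul, ← pow_add, harith, mul_comm d q, pow_mul, hy, mul_pow, ← pow_mul,
            mul_comm l d, pow_mul, hΩd1, one_pow, one_mul]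
        exact mul_right_cancel₀ (pow_ne_zero d hy0) h1
      rw [hNt, pow_add, pow_one, pow_mul, hyM, one_pow, mul_one]
  -- additivity of AMap
  have AMap_sum : ∀ (jj : ℕ) (s : Finset ℕ) (g : ℕ → E),
      AMap q d ω jj (∑ k ∈ s, g k) = ∑ k ∈ s, AMap q d ω jj (g k) := by
    intro jj s g
    unfold AMap
    simp only [hfrob, Finset.mul_sum]
    rw [Finset.sum_comm]
  -- the key per-index computation
  have key : ∀ i ∈ Finset.range d,
      Ω ^ i * ((d : E) * algebraMap F E (u i) * (Ω ^ (j i))⁻¹)⁻¹ ^ r i *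
        (AMap q d ω (j i)
          (∑ k ∈ Finset.range d, algebraMap F E (u k) * (AMap q d ω k x) ^ m k)) ^ r i
      = Ω ^ i * AMap q d ω i x := by
    intro i hi
    rw [Finset.mem_range] at hi
    obtain ⟨hji, hjicong⟩ := hj i hi
    -- compute AMap (j i) f
    have hAf : AMap q d ω (j i)
        (∑ k ∈ Finset.range d, algebraMap F E (u k) * (AMap q d ω k x) ^ m k)
        = (d : E) * Ω ^ (i * m i * (d - 1)) *
            (algebraMap F E (u i) * (AMap q d ω i x) ^ m i) := by
      rw [AMap_sum]
      rw [Finset.sum_congr rfl (fun k _ => AMap_eigen _ (k * m k) (j i) (eigz k))]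
      rw [Finset.sum_eq_single i]
      · rw [if_pos ((dvd_iff (j i) (i * m i)).mpr hjicong)]
      · intro k hk hki
        rw [Finset.mem_range] at hk
        rw [if_neg, zero_mul, zero_mul]
        intro hdvd
        have h1 : j i ≡ k * m k [MOD d] := (dvd_iff (j i) (k * m k)).mp hdvd
        have h2 : i * m i ≡ k * m k [MOD d] := hjicong.symm.trans h1
        exact hki (hinj (by simpa using hk) (by simpa using hi) h2.symm)
      · intro hni
        exact absurd (Finset.mem_range.mpr hi) hni
    have hinv : (Ω ^ (j i))⁻¹ = Ω ^ (i * m i * (d - 1)) := by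
      apply inv_eq_of_mul_eq_one_right
      rw [← pow_add]
      obtain ⟨t, ht⟩ := (dvd_iff (j i) (i * m i)).mpr hjicong
      rw [ht, pow_mul, hΩd1, one_pow]
    have huE : algebraMap F E (u i) ≠ 0 := fun h => hu i hi ((map_eq_zero _).mp h)
    have hc : (d : E) * algebraMap F E (u i) * Ω ^ (i * m i * (d - 1)) ≠ 0 :=
      mul_ne_zero (mul_ne_zero hdE huE) (pow_ne_zero _ hΩne)
    rw [hAf, hinv]
    have hrw : (d : E) * Ω ^ (i * m i * (d - 1)) *
        (algebraMap F E (u i) * (AMap q d ω i x) ^ m i)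
        = ((d : E) * algebraMap F E (u i) * Ω ^ (i * m i * (d - 1))) *
            (AMap q d ω i x) ^ m i := by ring
    rw [hrw, mul_pow ((d : E) * algebraMap F E (u i) * Ω ^ (i * m i * (d - 1)))
      ((AMap q d ω i x) ^ m i) (r i)]
    rw [mul_assoc (Ω ^ i), ← mul_assoc (((d : E) * algebraMap F E (u i) *
      Ω ^ (i * m i * (d - 1)))⁻¹ ^ r i), ← mul_pow, inv_mul_cancel₀ hc, one_pow, one_mul]
    rw [← pow_mul]
    congr 1
    exact pow_eigen (AMap q d ω i x) i (m i * r i) (eigenA i x) (hr i hi).2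
  rw [Finset.sum_congr rfl key]
  -- final sum: ∑ i, Ω^i * A_i(x) = d * x
  have hsum : ∑ i ∈ Finset.range d, Ω ^ i * AMap q d ω i x = (d : E) * x := by
    unfold AMap
    rw [← hΩdef]
    simp only [Finset.mul_sum]
    rw [Finset.sum_comm]
    have hcol : ∀ k ∈ Finset.range d,
        ∑ i ∈ Finset.range d, Ω ^ i * (Ω ^ (i * k) * x ^ q ^ (d - 1 - k))
        = (if d ∣ (k + 1) then (d : E) else 0) * x ^ q ^ (d - 1 - k) := by
      intro k _
      have hterm : ∀ i ∈ Finset.range d,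
          Ω ^ i * (Ω ^ (i * k) * x ^ q ^ (d - 1 - k))
          = (Ω ^ (k + 1)) ^ i * x ^ q ^ (d - 1 - k) := by
        intro i _
        rw [← mul_assoc, ← pow_add, ← pow_mul]
        congr 2
        ring
      rw [Finset.sum_congr rfl hterm, ← Finset.sum_mul, geom_sum_orderOf hΩord]
    rw [Finset.sum_congr rfl hcol]
    rw [Finset.sum_eq_single (d - 1)]
    · rw [if_pos (show d ∣ (d - 1) + 1 from by
        rw [show d - 1 + 1 = d from by omega])]
      rw [Nat.sub_self, pow_zero, pow_one]
    · intro k hk hkne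
      rw [Finset.mem_range] at hk
      rw [if_neg, zero_mul]
      intro hdvd
      exact hkne (by have := Nat.le_of_dvd (by omega) hdvd; omega)
    · intro hni
      exact absurd (Finset.mem_range.mpr (by omega)) hni
  rw [hsum, ← mul_assoc, inv_mul_cancel₀ hdE, one_mul]
end

section
/- Let u₀, …, u_{d−1} ∈ F^× satisfy u_i·ω^i = u_j·ω^j for all 0 ≤ i, j ≤ d − 1. Then the map f : E → E, f(x) = Σ_{i=0}^{d−1} u_i · A_i(x)^{q^d − 2}, is an involution of E, i.e. f(f(x)) = x for all x ∈ E. -/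
/-!
The Frobenius `x ↦ x ^ q` is `F`-linear of order `d` on `E`, and `A_i(x)` is an eigenvector of it
with eigenvalue `ω ^ i`. Inversion sends such an eigenvector to one with eigenvalue `ω ^ (-i)`, and
by orthogonality of the characters `k ↦ ω ^ (j k)` the map `A_j` kills it unless `i + j ≡ 0`, in
which case it multiplies it by `d ω ^ i`. Hence `A_j (f x) = d u_j ω ^ j A_{-j}(x)⁻¹`, so
`f (f x) = d⁻¹ ∑ i, ω ^ i A_i(x)`, which is `x` by orthogonality again. Here `-j mod d` is written
`(d - j) % d`, and `z ^ (q ^ d - 2) = z⁻¹` also at `z = 0`.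
-/

open Finset

theorem pow_pow_eq_pow_mul_of_pow_eq_mul {M : Type*} [CommMonoid M] {q : ℕ} {μ z : M}
    (hμ : μ ^ q = μ) (hz : z ^ q = μ * z) (t : ℕ) : z ^ q ^ t = μ ^ t * z := by
  induction t with
  | zero => simp
  | succ t ih =>
    rw [pow_succ, pow_mul, ih, mul_pow, ← pow_mul, mul_comm t, pow_mul, hμ, hz, pow_succ, mul_assoc]

theorem Nat.dvd_add_iff_eq_sub_mod {d i j : ℕ} (hi : i < d) (hj : j < d) :
    d ∣ i + j ↔ i = (d - j) % d := by
  rcases Nat.eq_zero_or_pos j with rfl | hj0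
  · rw [add_zero, Nat.sub_zero, Nat.mod_self, Nat.dvd_iff_mod_eq_zero, Nat.mod_eq_of_lt hi]
  · rw [Nat.mod_eq_of_lt (by omega : d - j < d)]
    constructor
    · intro h
      have := Nat.eq_of_dvd_of_lt_two_mul (by omega) h (by omega)
      omega
    · rintro rfl
      rw [Nat.sub_add_cancel hj.le]

theorem Finset.sum_range_ite_dvd_add {M : Type*} [AddCommMonoid M] {d j : ℕ} (hj : j < d)
    (g : ℕ → M) : ∑ i ∈ range d, (if d ∣ i + j then g i else 0) = g ((d - j) % d) := by
  have hmem : (d - j) % d ∈ range d := mem_range.2 (Nat.mod_lt _ (by omega))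
  calc _ = ∑ i ∈ range d, (if i = (d - j) % d then g i else 0) :=
        sum_congr rfl fun i hi =>
          if_congr (Nat.dvd_add_iff_eq_sub_mod (mem_range.1 hi) hj) rfl rfl
    _ = _ := by rw [sum_ite_eq', if_pos hmem]

theorem Finset.sum_range_sub_mod {M : Type*} [AddCommMonoid M] (d : ℕ) (g : ℕ → M) :
    ∑ j ∈ range d, g ((d - j) % d) = ∑ j ∈ range d, g j := by
  have hinv : ∀ j ∈ range d, (d - (d - j) % d) % d = j := fun j hj => by
    have hj := mem_range.1 hj
    rcases Nat.eq_zero_or_pos j with rfl | hj0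
    · simp
    · rw [Nat.mod_eq_of_lt (by omega : d - j < d), Nat.mod_eq_of_lt (by omega)]
      omega
  have hmaps : ∀ j ∈ range d, (d - j) % d ∈ range d := fun j hj =>
    mem_range.2 (Nat.mod_lt _ (by have := mem_range.1 hj; omega))
  exact sum_nbij' _ _ hmaps hmaps hinv hinv fun _ _ => rfl

theorem IsPrimitiveRoot.geom_sum_pow_eq_ite {R : Type*} [CommRing R] [IsDomain R] {ζ : R} {d : ℕ}
    (hζ : IsPrimitiveRoot ζ d) (m : ℕ) :
    ∑ k ∈ range d, (ζ ^ m) ^ k = if d ∣ m then (d : R) else 0 := by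
  split_ifs with hdm
  · simp [(hζ.pow_eq_one_iff_dvd m).2 hdm]
  · have hne : ζ ^ m ≠ 1 := mt (hζ.pow_eq_one_iff_dvd m).1 hdm
    refine eq_zero_of_ne_zero_of_mul_left_eq_zero (sub_ne_zero_of_ne hne.symm) ?_
    rw [mul_neg_geom_sum, ← pow_mul, mul_comm, pow_mul, hζ.pow_eq_one, one_pow, sub_self]

theorem FiniteField.pow_card_sub_two_eq_inv {K : Type*} [Field K] [Fintype K]
    (hK : 2 < Fintype.card K) (x : K) : x ^ (Fintype.card K - 2) = x⁻¹ := by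
  rcases eq_or_ne x 0 with rfl | hx
  · rw [inv_zero, zero_pow (by omega)]
  · refine eq_inv_of_mul_eq_one_left ?_
    rw [← pow_succ, show Fintype.card K - 2 + 1 = Fintype.card K - 1 by omega]
    exact FiniteField.pow_card_sub_one_eq_one x hx

theorem pow_sub_mod_eq_inv {G : Type*} [DivisionMonoid G] {ζ : G} {d j : ℕ} (hζ : ζ ^ d = 1)
    (hj : j < d) : ζ ^ ((d - j) % d) = (ζ ^ j)⁻¹ := by
  refine eq_inv_of_mul_eq_one_left ?_
  obtain ⟨c, hc⟩ := (Nat.dvd_add_iff_eq_sub_mod (Nat.mod_lt _ (by omega)) hj).2 rfl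
  rw [← pow_add, hc, pow_mul, hζ, one_pow]

section AMap

variable {F E : Type*} [Field F] [Field E] [Algebra F E] {q d : ℕ} {ω : F}

/-- The map `f` of the theorem, with `z ^ (q ^ d - 2)` written as `z⁻¹`. -/
def AMapInvSum (q d : ℕ) (ω : F) (u : ℕ → F) (x : E) : E :=
  ∑ i ∈ range d, algebraMap F E (u i) * (AMap q d ω i x)⁻¹

theorem sum_pow_mul_AMap (hω : IsPrimitiveRoot ω d) (x : E) :
    ∑ i ∈ range d, algebraMap F E ω ^ i * AMap q d ω i x = d * x := by
  set ζ := algebraMap F E ω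
  have hζ : IsPrimitiveRoot ζ d := hω.map_of_injective (algebraMap F E).injective
  calc ∑ i ∈ range d, ζ ^ i * AMap q d ω i x
      = ∑ k ∈ range d, (∑ i ∈ range d, (ζ ^ (k + 1)) ^ i) * x ^ q ^ (d - 1 - k) := by
        simp only [AMap, mul_sum, sum_mul]
        rw [sum_comm]
        exact sum_congr rfl fun _ _ => sum_congr rfl fun _ _ => by ring
    _ = d * x := by
        simp only [hζ.geom_sum_pow_eq_ite]
        rcases d with _ | n
        · simp
        rw [sum_range_succ, if_pos dvd_rfl, Nat.add_sub_cancel, Nat.sub_self, pow_zero, pow_one,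
          add_eq_right]
        refine sum_eq_zero fun k hk => ?_
        rw [if_neg fun h => ?_, zero_mul]
        have := Nat.le_of_dvd k.succ_pos h
        have := mem_range.1 hk
        omega

variable [Fintype F]

theorem FiniteField.frobeniusAlgHom_pow_apply (t : ℕ) (x : E) :
    (FiniteField.frobeniusAlgHom F E ^ t) x = x ^ Fintype.card F ^ t := by
  rw [AlgHom.coe_pow, FiniteField.coe_frobeniusAlgHom, pow_iterate]

theorem AMap_sum_algebraMap_mul (hF : Fintype.card F = q) (j : ℕ) {ι : Type*} (s : Finset ι)
    (c : ι → F) (g : ι → E) :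
    AMap q d ω j (∑ i ∈ s, algebraMap F E (c i) * g i)
      = ∑ i ∈ s, algebraMap F E (c i) * AMap q d ω j (g i) := by
  subst hF
  simp only [AMap, ← FiniteField.frobeniusAlgHom_pow_apply, map_sum, map_mul, AlgHom.commutes,
    mul_sum]
  rw [sum_comm]
  exact sum_congr rfl fun _ _ => sum_congr rfl fun _ _ => mul_left_comm _ _ _

theorem AMap_pow_eq_pow_mul_self (hF : Fintype.card F = q) (hω : ω ^ d = 1) {x : E}
    (hx : x ^ q ^ d = x) (i : ℕ) : AMap q d ω i x ^ q = algebraMap F E ω ^ i * AMap q d ω i x := by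
  subst hF
  rcases d with _ | d
  · simp [AMap]
  have hζ : algebraMap F E ω ^ (i * (d + 1)) = 1 := by
    rw [pow_mul', ← map_pow, hω, map_one, one_pow]
  rw [← FiniteField.frobeniusAlgHom_apply F, AMap, map_sum, mul_sum, sum_range_succ',
    sum_range_succ]
  simp only [map_mul, map_pow, AlgHom.commutes, FiniteField.frobeniusAlgHom_apply, ← pow_mul,
    ← pow_succ']
  congr 1
  · refine sum_congr rfl fun k hk => ?_
    have hk := mem_range.1 hk
    rw [mul_add_one, pow_add, mul_comm (_ ^ (i * k)), mul_assoc,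
      show d + 1 - 1 - (k + 1) + 1 = d + 1 - 1 - k by omega]
  · rw [Nat.sub_zero, Nat.add_sub_cancel, hx, mul_zero, pow_zero, one_mul, Nat.sub_self, pow_zero,
      pow_one, ← mul_assoc, ← pow_add, add_comm i, ← mul_add_one, hζ, one_mul]

theorem AMap_inv_of_pow_eq_pow_mul (hF : Fintype.card F = q) (hω : IsPrimitiveRoot ω d) {w : E}
    {i : ℕ} (hw : w ^ q = algebraMap F E ω ^ i * w) (j : ℕ) :
    AMap q d ω j w⁻¹ = (if d ∣ i + j then (d : E) * algebraMap F E ω ^ i else 0) * w⁻¹ := by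
  set ζ := algebraMap F E ω
  have hζ : IsPrimitiveRoot ζ d := hω.map_of_injective (algebraMap F E).injective
  have hζq : (ζ ^ i)⁻¹ ^ q = (ζ ^ i)⁻¹ := by
    rw [← map_pow, ← map_inv₀, ← map_pow, ← hF, FiniteField.pow_card]
  have hwinv (t : ℕ) : w⁻¹ ^ q ^ t = (ζ ^ i)⁻¹ ^ t * w⁻¹ :=
    pow_pow_eq_pow_mul_of_pow_eq_mul hζq (by rw [inv_pow, hw, mul_inv]) t
  have hterm : ∀ k ∈ range d,
      ζ ^ (j * k) * w⁻¹ ^ q ^ (d - 1 - k) = ζ ^ i * (ζ ^ (i + j)) ^ k * w⁻¹ := by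
    intro k hk
    obtain ⟨r, rfl⟩ : ∃ r, d = k + 1 + r := ⟨d - 1 - k, by have := mem_range.1 hk; omega⟩
    rw [hwinv, ← mul_assoc]
    congr 1
    rw [show k + 1 + r - 1 - k = r by omega, inv_pow, ← div_eq_mul_inv,
      div_eq_iff (pow_ne_zero _ (pow_ne_zero _ (hζ.ne_zero (by omega))))]
    calc ζ ^ (j * k) = ζ ^ (j * k) * (ζ ^ (k + 1 + r)) ^ i := by
          rw [hζ.pow_eq_one, one_pow, mul_one]
      _ = _ := by ring
  rw [AMap, sum_congr rfl hterm, ← sum_mul, ← mul_sum, hζ.geom_sum_pow_eq_ite]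
  split_ifs <;> ring

theorem AMap_AMapInvSum (hF : Fintype.card F = q) (hω : IsPrimitiveRoot ω d) {x : E}
    (hx : x ^ q ^ d = x) {u : ℕ → F} (huω : ∀ i < d, ∀ j < d, u i * ω ^ i = u j * ω ^ j)
    {j : ℕ} (hj : j < d) :
    AMap q d ω j (AMapInvSum q d ω u x)
      = d * algebraMap F E (u j * ω ^ j) * (AMap q d ω ((d - j) % d) x)⁻¹ := by
  rw [AMapInvSum, AMap_sum_algebraMap_mul hF]
  calc _ = ∑ i ∈ range d, if d ∣ i + j
          then d * algebraMap F E (u i * ω ^ i) * (AMap q d ω i x)⁻¹ else 0 :=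
        sum_congr rfl fun i _ => by
          rw [AMap_inv_of_pow_eq_pow_mul hF hω (AMap_pow_eq_pow_mul_self hF hω.pow_eq_one hx i)]
          split_ifs
          · rw [map_mul, map_pow]; ring
          · rw [zero_mul, mul_zero]
    _ = _ := by rw [sum_range_ite_dvd_add hj, huω _ (Nat.mod_lt _ (by omega)) j hj]

theorem AMapInvSum_AMapInvSum (hF : Fintype.card F = q) [NeZero d] (hω : IsPrimitiveRoot ω d)
    {x : E} (hx : x ^ q ^ d = x) {u : ℕ → F} (hu : ∀ i < d, u i ≠ 0)
    (huω : ∀ i < d, ∀ j < d, u i * ω ^ i = u j * ω ^ j) :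
    AMapInvSum q d ω u (AMapInvSum q d ω u x) = x := by
  have hζ : IsPrimitiveRoot (algebraMap F E ω) d :=
    hω.map_of_injective (algebraMap F E).injective
  have hterm : ∀ j ∈ range d, algebraMap F E (u j) * (AMap q d ω j (AMapInvSum q d ω u x))⁻¹
      = (d : E)⁻¹ * (algebraMap F E ω ^ ((d - j) % d) * AMap q d ω ((d - j) % d) x) := by
    intro j hj
    have hj := mem_range.1 hj
    have huj : algebraMap F E (u j) ≠ 0 := by simpa using hu j hj
    rw [AMap_AMapInvSum hF hω hx huω hj, pow_sub_mod_eq_inv hζ.pow_eq_one hj, map_mul, map_pow]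
    field_simp
  rw [AMapInvSum, sum_congr rfl hterm,
    sum_range_sub_mod d fun i => (d : E)⁻¹ * (algebraMap F E ω ^ i * AMap q d ω i x),
    ← mul_sum, sum_pow_mul_AMap hω, inv_mul_cancel_left₀ hζ.neZero'.out]

end AMap

theorem sum_AMap_pow_involution_general
    (q d : ℕ) (hd : 1 < d)
    (F E : Type*) [Field F] [Field E] [Algebra F E] [Fintype F] [Fintype E]
    (hF : Fintype.card F = q) (hE : Fintype.card E = q ^ d)
    (ω : F) (hω : orderOf ω = d)
    (u : ℕ → F) (hu : ∀ i < d, u i ≠ 0)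
    (huω : ∀ i < d, ∀ j < d, u i * ω ^ i = u j * ω ^ j) :
    ∀ x : E,
      (fun y : E => ∑ i ∈ Finset.range d,
          algebraMap F E (u i) * (AMap q d ω i y) ^ (q ^ d - 2))
        ((fun y : E => ∑ i ∈ Finset.range d,
          algebraMap F E (u i) * (AMap q d ω i y) ^ (q ^ d - 2)) x) = x := by
  intro x
  have : NeZero d := ⟨by omega⟩
  have hcard : 2 < Fintype.card E := by
    have hq_two : 2 ≤ q := hF ▸ Fintype.one_lt_card
    calc 2 < q ^ 2 := by nlinarith
      _ ≤ Fintype.card E := hE ▸ Nat.pow_le_pow_right (by omega) hd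
  simp only [← hE, FiniteField.pow_card_sub_two_eq_inv hcard]
  exact AMapInvSum_AMapInvSum hF (hω ▸ IsPrimitiveRoot.orderOf ω) (hE ▸ FiniteField.pow_card x)
    hu huω

theorem sum_AMap_pow_involution
    (q d : ℕ) (hd : 1 < d) (hq : q % d = 1)
    (F E : Type*) [Field F] [Field E] [Algebra F E] [Fintype F] [Fintype E]
    (hF : Fintype.card F = q) (hE : Fintype.card E = q ^ d)
    (ω : F) (hω : orderOf ω = d)
    (u : ℕ → F) (hu : ∀ i < d, u i ≠ 0)
    (huω : ∀ i < d, ∀ j < d, u i * ω ^ i = u j * ω ^ j) :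
    ∀ x : E,
      (fun y : E => ∑ i ∈ Finset.range d,
          algebraMap F E (u i) * (AMap q d ω i y) ^ (q ^ d - 2))
        ((fun y : E => ∑ i ∈ Finset.range d,
          algebraMap F E (u i) * (AMap q d ω i y) ^ (q ^ d - 2)) x) = x :=
  sum_AMap_pow_involution_general q d hd F E hF hE ω hω u hu huω
end

section
/- Let u₁, u₂ ∈ F^× and let m be a positive integer. Then the map f : E → E, f(x) = u₁·(x^q − x) + u₂·(x + x^q + ⋯ + x^{q^{d−1}})^m, is a bijection of E if and only if gcd(m, q − 1) = 1. -/
theorem pp_iff_gcd_one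
    (q d : ℕ) (hd : 1 < d) (hqd : Nat.Coprime q d)
    (F E : Type*) [Field F] [Field E] [Algebra F E] [Fintype F] [Fintype E]
    (hF : Fintype.card F = q) (hE : Fintype.card E = q ^ d)
    (u₁ u₂ : F) (hu₁ : u₁ ≠ 0) (hu₂ : u₂ ≠ 0)
    (m : ℕ) (hm : 0 < m) :
    Function.Bijective (fun x : E =>
        algebraMap F E u₁ * (x ^ q - x) +
          algebraMap F E u₂ * (∑ k ∈ Finset.range d, x ^ (q ^ k)) ^ m) ↔
      Nat.gcd m (q - 1) = 1 := by
  classical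
  have hinj := (algebraMap F E).injective
  set p := ringChar F with hpdef
  haveI : CharP F p := ringChar.charP F
  obtain ⟨n, hp, hcard⟩ := FiniteField.card F p
  haveI : Fact p.Prime := ⟨hp⟩
  haveI : CharP E p := charP_of_injective_algebraMap hinj p
  have hq : q = p ^ (n : ℕ) := by rw [← hF, hcard]
  have hq2 : 2 ≤ q := by rw [← hF]; exact Fintype.one_lt_card
  -- p divides q, so p does not divide d, so (d : F) etc nonzero
  have hpd : ¬ (p : ℕ) ∣ d := by
    refine (hp.coprime_iff_not_dvd).mp (Nat.Coprime.coprime_dvd_left ?_ hqd)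
    rw [hq]
    exact dvd_pow_self p n.pos.ne'
  have hdE : (d : E) ≠ 0 := by
    simpa [CharP.cast_eq_zero_iff E p] using hpd
  have hdF : (d : F) ≠ 0 := by
    simpa [CharP.cast_eq_zero_iff F p] using hpd
  -- frobenius facts
  have frob_sub : ∀ (a b : E) (k : ℕ), (a - b) ^ q ^ k = a ^ q ^ k - b ^ q ^ k := by
    intro a b k
    rw [hq, ← pow_mul]
    exact sub_pow_char_pow a b (n * k)
  have frob_sum : ∀ (f : ℕ → E) (s : Finset ℕ), (∑ i ∈ s, f i) ^ q = ∑ i ∈ s, f i ^ q := by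
    intro f s
    rw [hq]
    exact sum_pow_char_pow p n s f
  -- fixed points of x ↦ x^q
  have fixpow : ∀ (c : E), c ^ q = c → ∀ k, c ^ q ^ k = c := by
    intro c hc k
    induction k with
    | zero => simp
    | succ k ih => rw [pow_succ, pow_mul, ih, hc]
  have fixmap : ∀ a : F, (algebraMap F E a) ^ q = algebraMap F E a := by
    intro a
    rw [← map_pow, ← hF, FiniteField.pow_card]
  have xqd : ∀ x : E, x ^ q ^ d = x := by
    intro x
    rw [← hE]; exact FiniteField.pow_card x
  set T : E → E := fun x => ∑ k ∈ Finset.range d, x ^ q ^ k with hT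
  have Tfix : ∀ x : E, (T x) ^ q = T x := by
    intro x
    rw [hT]
    simp only
    rw [frob_sum]
    have h1 : ∀ k, (x ^ q ^ k) ^ q = x ^ q ^ (k + 1) := by
      intro k; rw [← pow_mul, ← pow_succ]
    simp only [h1]
    have h2 := Finset.sum_range_succ' (fun k => x ^ q ^ k) d
    have h3 := Finset.sum_range_succ (fun k => x ^ q ^ k) d
    rw [h2] at h3
    rw [xqd] at h3
    have : x ^ q ^ 0 = x := by simp
    rw [this] at h3
    linear_combination h3
  have Tsub : ∀ x y : E, T x - T y = T (x - y) := by
    intro x y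
    rw [hT]
    simp only [← Finset.sum_sub_distrib]
    refine Finset.sum_congr rfl fun k _ => ?_
    rw [frob_sub]
  have Tconst : ∀ c : E, c ^ q = c → T c = (d : E) * c := by
    intro c hc
    rw [hT]
    simp only
    have : ∀ k ∈ Finset.range d, c ^ q ^ k = c := fun k _ => fixpow c hc k
    rw [Finset.sum_congr rfl this, Finset.sum_const, Finset.card_range, nsmul_eq_mul]
  have Tlin : ∀ (c z : E), c ^ q = c → T (c * z) = c * T z := by
    intro c z hc
    rw [hT]
    simp only
    rw [Finset.mul_sum]
    refine Finset.sum_congr rfl fun k _ => ?_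
    rw [mul_pow, fixpow c hc k]
  have Ttele : ∀ x : E, T (x ^ q - x) = 0 := by
    intro x
    rw [hT]
    simp only
    have h1 : ∀ k, (x ^ q - x) ^ q ^ k = x ^ q ^ (k + 1) - x ^ q ^ k := by
      intro k
      rw [frob_sub]
      congr 1
      rw [← pow_mul, ← pow_succ']
    simp only [h1]
    rw [Finset.sum_range_sub (fun k => x ^ q ^ k), xqd]
    simp
  -- key injectivity of m-th power on fixed points when gcd = 1
  constructor
  · -- bijective → gcd = 1
    intro hbij
    by_contra hg
    -- construct two distinct points with equal image
    have hq1 : 0 < q - 1 := by omega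
    set g := Nat.gcd m (q - 1) with hgdef
    have hgpos : 0 < g := Nat.gcd_pos_of_pos_left (q - 1) hm
    have hgne : g ≠ 1 := hg
    have hg1 : 1 < g := by omega
    have hgdvd : g ∣ q - 1 := Nat.gcd_dvd_right m (q - 1)
    have hgm : g ∣ m := Nat.gcd_dvd_left m (q - 1)
    obtain ⟨g0, hg0⟩ := IsCyclic.exists_generator (α := Fˣ)
    have horder : orderOf g0 = q - 1 := by
      rw [orderOf_eq_card_of_forall_mem_zpowers hg0, Nat.card_eq_fintype_card, Fintype.card_units, hF]
    set t₂ : Fˣ := g0 ^ ((q - 1) / g) with ht₂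
    have ht₂ne : t₂ ≠ 1 := by
      intro h
      have := orderOf_dvd_of_pow_eq_one h
      rw [horder] at this
      have hlt : (q - 1) / g < q - 1 := Nat.div_lt_self hq1 hg1
      have hpos : 0 < (q - 1) / g := Nat.div_pos (Nat.le_of_dvd hq1 hgdvd) (by omega)
      have := Nat.le_of_dvd hpos this
      omega
    have ht₂m : t₂ ^ m = 1 := by
      rw [ht₂, ← pow_mul]
      apply orderOf_dvd_iff_pow_eq_one.mp
      rw [horder]
      obtain ⟨m', hm'⟩ := hgm
      obtain ⟨k', hk'⟩ := hgdvd
      refine ⟨m', ?_⟩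
      rw [hk', hm', Nat.mul_div_cancel_left k' (by omega)]
      ring
    -- the two preimages
    set a : F := (d : F)⁻¹ with ha
    set x : E := algebraMap F E (a * 1) with hx
    set y : E := algebraMap F E (a * (t₂ : F)) with hy
    have hval : ∀ t : F, (fun x : E =>
        algebraMap F E u₁ * (x ^ q - x) +
          algebraMap F E u₂ * (∑ k ∈ Finset.range d, x ^ (q ^ k)) ^ m)
        (algebraMap F E (a * t)) = algebraMap F E (u₂ * t ^ m) := by
      intro t
      simp only
      rw [fixmap, sub_self, mul_zero, zero_add]
      have : (∑ k ∈ Finset.range d, (algebraMap F E (a * t)) ^ q ^ k)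
          = T (algebraMap F E (a * t)) := rfl
      rw [this, Tconst _ (fixmap _), map_mul, ← mul_assoc]
      have : (d : E) * algebraMap F E a = 1 := by
        rw [ha, ← map_natCast (algebraMap F E), ← map_mul, mul_inv_cancel₀ hdF, map_one]
      rw [this, one_mul, ← map_pow, ← map_mul]
    have heq : (fun x : E =>
        algebraMap F E u₁ * (x ^ q - x) +
          algebraMap F E u₂ * (∑ k ∈ Finset.range d, x ^ (q ^ k)) ^ m) x
        = (fun x : E =>
        algebraMap F E u₁ * (x ^ q - x) +
          algebraMap F E u₂ * (∑ k ∈ Finset.range d, x ^ (q ^ k)) ^ m) y := by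
      rw [hx, hy, hval, hval]
      congr 2
      rw [one_pow]
      have : ((t₂ : F)) ^ m = ((t₂ ^ m : Fˣ) : F) := by push_cast; ring
      rw [this, ht₂m, Units.val_one]
    have hxy : x = y := hbij.injective heq
    rw [hx, hy] at hxy
    have hxy2 := hinj hxy
    have ha0 : a ≠ 0 := inv_ne_zero hdF
    have h1 : (1 : F) = (t₂ : F) := mul_left_cancel₀ ha0 hxy2
    exact ht₂ne (Units.ext (by simpa using h1.symm))
  · -- gcd = 1 → bijective
    intro hgcd
    rw [Fintype.bijective_iff_injective_and_card]
    refine ⟨?_, rfl⟩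
    intro x y hxy
    simp only at hxy
    have hTx : (∑ k ∈ Finset.range d, x ^ q ^ k) = T x := rfl
    have hTy : (∑ k ∈ Finset.range d, y ^ q ^ k) = T y := rfl
    rw [hTx, hTy] at hxy
    have hu₁E : algebraMap F E u₁ ≠ 0 := by simpa using hu₁
    have hu₂E : algebraMap F E u₂ ≠ 0 := by simpa using hu₂
    have happ : ∀ z : E, T (algebraMap F E u₁ * (z ^ q - z) + algebraMap F E u₂ * T z ^ m)
        = (d : E) * (algebraMap F E u₂ * T z ^ m) := by
      intro z
      have h1 : T (algebraMap F E u₁ * (z ^ q - z) + algebraMap F E u₂ * T z ^ m)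
          - T (algebraMap F E u₂ * T z ^ m) = T (algebraMap F E u₁ * (z ^ q - z)) := by
        rw [Tsub]; congr 1; ring
      rw [Tlin _ _ (fixmap u₁), Ttele, mul_zero, sub_eq_zero] at h1
      rw [h1]
      apply Tconst
      rw [mul_pow, fixmap, pow_right_comm, Tfix]
    have hT2 := congrArg T hxy
    rw [happ x, happ y] at hT2
    have hmm : T x ^ m = T y ^ m :=
      mul_left_cancel₀ hu₂E (mul_left_cancel₀ hdE hT2)
    have hTeq : T x = T y := by
      rcases eq_or_ne (T y) 0 with h0 | h0
      · rw [h0, zero_pow hm.ne'] at hmm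
        rw [h0]
        exact pow_eq_zero_iff hm.ne' |>.mp hmm
      · have hx0 : T x ≠ 0 := by
          intro h
          exact (pow_ne_zero m h0) (by rw [← hmm, h, zero_pow hm.ne'])
        have hne : T x / T y ≠ 0 := div_ne_zero hx0 h0
        have hz1 : (T x / T y) ^ m = 1 := by
          rw [div_pow, hmm, div_self (pow_ne_zero _ h0)]
        have hzq : (T x / T y) ^ (q - 1) = 1 := by
          have hfix : (T x / T y) ^ q = T x / T y := by rw [div_pow, Tfix, Tfix]
          have hstep : (T x / T y) ^ (q - 1) * (T x / T y) = 1 * (T x / T y) := by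
            rw [← pow_succ]
            have hq1 : q - 1 + 1 = q := by omega
            rw [hq1, hfix, one_mul]
          exact mul_right_cancel₀ hne hstep
        have hdvd : orderOf (T x / T y) ∣ 1 := by
          rw [← hgcd]
          exact Nat.dvd_gcd (orderOf_dvd_of_pow_eq_one hz1) (orderOf_dvd_of_pow_eq_one hzq)
        have hone : T x / T y = 1 := orderOf_eq_one_iff.mp (Nat.eq_one_of_dvd_one hdvd)
        exact (div_eq_one_iff_eq h0).mp hone
    rw [hTeq] at hxy
    have h3 : x ^ q - x = y ^ q - y :=
      mul_left_cancel₀ hu₁E (add_right_cancel hxy)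
    have hzfix : (x - y) ^ q = x - y := by
      have h4 := frob_sub x y 1
      rw [pow_one] at h4
      linear_combination h4 + h3
    have h5 : (d : E) * (x - y) = 0 := by
      rw [← Tconst _ hzfix, ← Tsub, hTeq, sub_self]
    have h6 := (mul_eq_zero.mp h5).resolve_left hdE
    exact sub_eq_zero.mp h6
end

section
/- Let u₁, u₂ ∈ F^×, let m be a positive integer with gcd(m, q − 1) = 1, and let r be a positive integer with m·r ≡ 1 (mod q − 1), so that f(x) = u₁·(x^q − x) + u₂·Tr(x)^m is a bijection of E. Then the compositional inverse of f is g(x) = (1/d)·(u₂·d)^{−r}·Tr(x)^r + ((d−1)/(2·d·u₁))·Tr(x) − (1/(d·u₁))·Σ_{i=1}^{d−1} i·x^{q^{d−1−i}}; that is, g(f(x)) = x for all x ∈ E. -/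
/-!
Write `y = f x`, `T = Tr x` and `c = u₂ T ^ m`. Both `u₁` and `c` are fixed by `z ↦ z ^ q`, so
`y ^ q ^ j = u₁ (x ^ q ^ (j + 1) - x ^ q ^ j) + c`. Summing over `j < d` telescopes to
`Tr y = d c`, and since `T ^ q = T` and `m r ≡ 1 [MOD q - 1]` this recovers `T = (Tr y / (u₂ d)) ^ r`.
By Abel summation the weighted sum `∑ i y ^ q ^ (d - 1 - i)` equals
`u₁ (T - d x) + (d (d - 1) / 2) c`, which is then solved for `x`.
-/

open Finset

theorem pow_eq_self_of_modEq_one {M : Type*} [Monoid M] {t : M} {q n : ℕ} (ht : t ^ q = t)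
    (hn : 0 < n) (h : n ≡ 1 [MOD q - 1]) : t ^ n = t := by
  obtain rfl | hq := q.eq_zero_or_pos
  · obtain rfl : t = 1 := by simpa [eq_comm] using ht
    exact one_pow n
  have hstep : t * t ^ (q - 1) = t := by rw [← pow_succ', Nat.sub_add_cancel hq, ht]
  have hperiodic : ∀ k, t ^ ((q - 1) * k + 1) = t := by
    intro k
    induction k with
    | zero => simp
    | succ k ih => rw [mul_add_one, add_right_comm, pow_add, ih, hstep]
  obtain ⟨k, hk⟩ := (Nat.modEq_iff_dvd' hn).mp h.symm
  obtain rfl : n = (q - 1) * k + 1 := by omega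
  exact hperiodic k

section Sequence

variable {R : Type*} [CommRing R]

theorem sum_range_natCast_succ_mul_sub (f : ℕ → R) (n : ℕ) :
    ∑ i ∈ range n, ((i + 1 : ℕ) : R) * (f i - f (i + 1)) = ∑ i ∈ range n, f i - n * f n := by
  induction n with
  | zero => simp
  | succ n ih => rw [sum_range_succ, ih, sum_range_succ]; push_cast; ring

variable {A c : R} {b g : ℕ → R}

theorem sum_range_of_eq_affine_sub (hg : ∀ j, g j = A * (b (j + 1) - b j) + c) (d : ℕ) :
    ∑ k ∈ range d, g k = A * (b d - b 0) + d * c := by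
  rw [sum_congr rfl fun k _ => hg k, sum_add_distrib, ← mul_sum, sum_range_sub, sum_const,
    card_range, nsmul_eq_mul]

theorem sum_Icc_mul_of_eq_affine_sub (hg : ∀ j, g j = A * (b (j + 1) - b j) + c) (d : ℕ) :
    ∑ i ∈ Icc 1 (d - 1), (i : R) * g (d - 1 - i) =
      A * (∑ k ∈ range d, b k - d * b 0) + ((d * (d - 1) / 2 : ℕ) : R) * c := by
  obtain _ | e := d
  · simp
  have hreindex : ∑ i ∈ Icc 1 e, (i : R) * g (e - i) =
      ∑ i ∈ range e, ((i + 1 : ℕ) : R) * (A * (b (e - i) - b (e - (i + 1))) + c) := by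
    rw [← Ico_add_one_right_eq_Icc, sum_Ico_eq_sum_range, Nat.add_sub_cancel]
    refine sum_congr rfl fun i hi => ?_
    rw [hg, add_comm 1 i, show e - (i + 1) + 1 = e - i by grind]
  have hgauss : ∑ i ∈ range e, ((i + 1 : ℕ) : R) = (((e + 1) * e / 2 : ℕ) : R) := by
    have h := sum_range_id (e + 1)
    rw [sum_range_succ', Nat.add_sub_cancel] at h
    rw [← h]
    push_cast
    simp
  have hreflect : ∑ i ∈ range e, b (e - i) = ∑ k ∈ range (e + 1), b k - b 0 := by
    rw [sum_range_succ', ← sum_range_reflect (fun i => b (i + 1)) e]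
    simp only [add_sub_cancel_right]
    exact sum_congr rfl fun i hi => by grind
  simp only [Nat.add_sub_cancel, hreindex, mul_add, sum_add_distrib, mul_left_comm _ A, ← mul_sum,
    ← sum_mul, hgauss, sum_range_natCast_succ_mul_sub (fun i => b (e - i)), hreflect,
    Nat.sub_self]
  push_cast
  ring

end Sequence

section Frobenius

variable {F R : Type*} [Field F] [Fintype F] [CommRing R] [Algebra F R]

local notation "q" => Fintype.card F

theorem natCast_ne_zero_of_coprime_card [Nontrivial R] {d : ℕ} (h : Nat.Coprime q d) :
    (d : R) ≠ 0 := by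
  rw [← map_natCast (algebraMap F R)]
  refine (map_ne_zero _).mpr fun hd => ?_
  have hchar := Nat.dvd_gcd (ringChar.dvd (FiniteField.cast_card_eq_zero F)) (ringChar.dvd hd)
  exact CharP.ringChar_ne_one (Nat.dvd_one.mp (h.gcd_eq_one ▸ hchar))

theorem affine_sub_pow_card_pow {A c : R} (hA : A ^ q = A) (hc : c ^ q = c) (x : R) (j : ℕ) :
    (A * (x ^ q - x) + c) ^ q ^ j = A * (x ^ q ^ (j + 1) - x ^ q ^ j) + c := by
  induction j with
  | zero => simp
  | succ j ih =>
    rw [pow_succ q j, pow_mul, ih]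
    change FiniteField.frobeniusAlgHom F R _ = _
    simp only [map_add, map_mul, map_sub, FiniteField.frobeniusAlgHom_apply, hA, hc, ← pow_mul,
      ← pow_succ]

theorem sum_range_pow_card_pow_pow_card {x : R} {d : ℕ} (hx : x ^ q ^ d = x) :
    (∑ k ∈ range d, x ^ q ^ k) ^ q = ∑ k ∈ range d, x ^ q ^ k := by
  change FiniteField.frobeniusAlgHom F R _ = _
  simp only [map_sum, FiniteField.frobeniusAlgHom_apply, ← pow_mul, ← pow_succ]
  have hshift := (sum_range_succ' (fun k => x ^ q ^ k) d).symm.trans (sum_range_succ _ d)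
  simp only [hx, pow_zero, pow_one] at hshift
  exact add_right_cancel hshift

end Frobenius

theorem inverse_of_trace_type_pp_general
    (q d : ℕ) (hqd : Nat.Coprime q d)
    (F E : Type*) [Field F] [Field E] [Algebra F E] [Fintype F] [Fintype E]
    (hF : Fintype.card F = q) (hE : Fintype.card E = q ^ d)
    (u₁ u₂ : F) (hu₁ : u₁ ≠ 0) (hu₂ : u₂ ≠ 0)
    (m : ℕ) (hm : 0 < m)
    (r : ℕ) (hr : 0 < r) (hmr : m * r ≡ 1 [MOD q - 1]) :
    ∀ x : E,
      (fun y : E =>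
        (d : E)⁻¹ * (algebraMap F E u₂ * (d : E))⁻¹ ^ r *
            (∑ k ∈ Finset.range d, y ^ (q ^ k)) ^ r +
          ((d * (d - 1) / 2 : ℕ) : E) * ((d : E) ^ 2 * algebraMap F E u₁)⁻¹ *
            (∑ k ∈ Finset.range d, y ^ (q ^ k)) -
          ((d : E) * algebraMap F E u₁)⁻¹ *
            ∑ i ∈ Finset.Icc 1 (d - 1), (i : E) * y ^ (q ^ (d - 1 - i)))
      ((fun x : E =>
        algebraMap F E u₁ * (x ^ q - x) +
          algebraMap F E u₂ * (∑ k ∈ Finset.range d, x ^ (q ^ k)) ^ m) x) = x := by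
  subst hF
  intro x
  dsimp only
  have hfix (u : F) : algebraMap F E u ^ Fintype.card F = algebraMap F E u :=
    (FiniteField.frobeniusAlgHom F E).commutes u
  have hx : x ^ Fintype.card F ^ d = x := hE ▸ FiniteField.pow_card x
  set T := ∑ k ∈ range d, x ^ Fintype.card F ^ k
  have hT : T ^ Fintype.card F = T := sum_range_pow_card_pow_pow_card hx
  have hc : (algebraMap F E u₂ * T ^ m) ^ Fintype.card F = algebraMap F E u₂ * T ^ m := by
    rw [mul_pow, hfix, ← pow_mul, mul_comm m, pow_mul, hT]
  have hy := affine_sub_pow_card_pow (hfix u₁) hc x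
  have htrace := sum_range_of_eq_affine_sub (b := fun k => x ^ Fintype.card F ^ k) hy d
  have hweighted := sum_Icc_mul_of_eq_affine_sub (b := fun k => x ^ Fintype.card F ^ k) hy d
  simp only [hx, pow_zero, pow_one, sub_self, mul_zero, zero_add] at htrace hweighted
  have hd : (d : E) ≠ 0 := natCast_ne_zero_of_coprime_card (F := F) hqd
  have hu₁' : algebraMap F E u₁ ≠ 0 := (map_ne_zero _).mpr hu₁
  have hu₂' : algebraMap F E u₂ ≠ 0 := (map_ne_zero _).mpr hu₂
  have hroot : (algebraMap F E u₂ * d)⁻¹ ^ r * (d * (algebraMap F E u₂ * T ^ m)) ^ r = T := by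
    rw [← mul_pow, show (algebraMap F E u₂ * d)⁻¹ * (d * (algebraMap F E u₂ * T ^ m)) = T ^ m by
      field_simp, ← pow_mul, pow_eq_self_of_modEq_one hT (Nat.mul_pos hm hr) hmr]
  rw [htrace, hweighted, mul_assoc _ (_ ^ r), hroot]
  field_simp
  ring

theorem inverse_of_trace_type_pp
    (q d : ℕ) (hd : 1 < d) (hqd : Nat.Coprime q d)
    (F E : Type*) [Field F] [Field E] [Algebra F E] [Fintype F] [Fintype E]
    (hF : Fintype.card F = q) (hE : Fintype.card E = q ^ d)
    (u₁ u₂ : F) (hu₁ : u₁ ≠ 0) (hu₂ : u₂ ≠ 0)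
    (m : ℕ) (hm : 0 < m) (hgcd : Nat.gcd m (q - 1) = 1)
    (r : ℕ) (hr : 0 < r) (hmr : m * r ≡ 1 [MOD q - 1]) :
    ∀ x : E,
      (fun y : E =>
        (d : E)⁻¹ * (algebraMap F E u₂ * (d : E))⁻¹ ^ r *
            (∑ k ∈ Finset.range d, y ^ (q ^ k)) ^ r +
          ((d * (d - 1) / 2 : ℕ) : E) * ((d : E) ^ 2 * algebraMap F E u₁)⁻¹ *
            (∑ k ∈ Finset.range d, y ^ (q ^ k)) -
          ((d : E) * algebraMap F E u₁)⁻¹ *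
            ∑ i ∈ Finset.Icc 1 (d - 1), (i : E) * y ^ (q ^ (d - 1 - i)))
      ((fun x : E =>
        algebraMap F E u₁ * (x ^ q - x) +
          algebraMap F E u₂ * (∑ k ∈ Finset.range d, x ^ (q ^ k)) ^ m) x) = x :=
  inverse_of_trace_type_pp_general q d hqd F E hF hE u₁ u₂ hu₁ hu₂ m hm r hr hmr
end
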